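/- arXiv:2601.15990 — 6 statements merged into one kernel-verified Lean document; each statement's English description precedes it below -/
import Mathlib

section
/- Let d ≥ 7 be an integer and C ∈ ℝ. Define, for x ∈ ℝ^d with x ≠ 0, u_C(x) = 8(d−4)(d−2)·‖x‖^{−4}, v_C(x) = −4·log‖x‖ + C, and w_C(x) = 4(d−2)·‖x‖^{−2}. Then at every point x ≠ 0 the stationary chemotaxis system holds pointwise: Δu_C(x) − div(u_C ∇v_C)(x) = 0, Δv_C(x) + w_C(x) = 0, and Δw_C(x) + u_C(x) = 0, where Δ is the Laplacian on ℝ^d and div(u∇v) = ⟨∇u, ∇v⟩ + u·Δv. -/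
/-- The Laplacian of a real-valued function on `ℝ^d`, as the sum of second
partial derivatives along the standard coordinate directions. -/
noncomputable def lap (d : ℕ) (f : EuclideanSpace ℝ (Fin d) → ℝ)
    (x : EuclideanSpace ℝ (Fin d)) : ℝ :=
  ∑ i : Fin d,
    fderiv ℝ (fun y => fderiv ℝ f y (EuclideanSpace.single i 1)) x (EuclideanSpace.single i 1)

/-- `div (u ∇v) = ⟨∇u, ∇v⟩ + u · Δv`. -/
noncomputable def divGrad (d : ℕ) (u v : EuclideanSpace ℝ (Fin d) → ℝ)
    (x : EuclideanSpace ℝ (Fin d)) : ℝ :=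
  (inner ℝ (gradient u x) (gradient v x) : ℝ) + u x * lap d v x

/-!
All three functions are radial, `f y = φ (‖y‖²)`, and for such functions
`∇f x = 2 φ'(‖x‖²) x` and `Δf x = 4 ‖x‖² φ''(‖x‖²) + 2 d φ'(‖x‖²)`. This gives
`Δ ‖x‖^p = p (p + d - 2) ‖x‖^(p-2)` and `Δ log ‖x‖ = (d - 2) / ‖x‖²`, after which each equation
of the system is an identity between multiples of a single power of `‖x‖`.
-/

variable {d : ℕ}

local notation "E" => EuclideanSpace ℝ (Fin d)

section Radial

variable {φ φ' φ'' : ℝ → ℝ}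

theorem hasFDerivAt_comp_norm_sq (hφ : ∀ t, 0 < t → HasDerivAt φ (φ' t) t) {x : E}
    (hx : x ≠ 0) :
    HasFDerivAt (fun y : E => φ (‖y‖ ^ 2)) (φ' (‖x‖ ^ 2) • (2 : ℕ) • innerSL ℝ x) x :=
  (hφ _ (pow_pos (norm_pos_iff.mpr hx) 2)).comp_hasFDerivAt x
    (hasStrictFDerivAt_norm_sq x).hasFDerivAt

theorem gradient_comp_norm_sq (hφ : ∀ t, 0 < t → HasDerivAt φ (φ' t) t) {x : E}
    (hx : x ≠ 0) :
    gradient (fun y : E => φ (‖y‖ ^ 2)) x = (2 * φ' (‖x‖ ^ 2)) • x := by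
  have : HasGradientAt (fun y : E => φ (‖y‖ ^ 2)) ((2 * φ' (‖x‖ ^ 2)) • x) x := by
    refine hasGradientAt_iff_hasFDerivAt.mpr <|
      (hasFDerivAt_comp_norm_sq hφ hx).congr_fderiv ?_
    ext v
    simp
    ring
  exact this.gradient

theorem fderiv_comp_norm_sq_single (hφ : ∀ t, 0 < t → HasDerivAt φ (φ' t) t) {x : E}
    (hx : x ≠ 0) (i : Fin d) :
    fderiv ℝ (fun y : E => φ (‖y‖ ^ 2)) x (EuclideanSpace.single i 1) =
      2 * φ' (‖x‖ ^ 2) * x i := by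
  rw [(hasFDerivAt_comp_norm_sq hφ hx).fderiv]
  simp [EuclideanSpace.inner_single_right]
  ring

theorem lap_comp_norm_sq (hφ : ∀ t, 0 < t → HasDerivAt φ (φ' t) t)
    (hφ' : ∀ t, 0 < t → HasDerivAt φ' (φ'' t) t) {x : E} (hx : x ≠ 0) :
    lap d (fun y : E => φ (‖y‖ ^ 2)) x
      = 4 * φ'' (‖x‖ ^ 2) * ‖x‖ ^ 2 + 2 * d * φ' (‖x‖ ^ 2) := by
  have second_partial (i : Fin d) :
      fderiv ℝ (fun y => fderiv ℝ (fun y : E => φ (‖y‖ ^ 2)) y (EuclideanSpace.single i 1)) x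
        (EuclideanSpace.single i 1) = 4 * φ'' (‖x‖ ^ 2) * x i ^ 2 + 2 * φ' (‖x‖ ^ 2) := by
    have first_partial :
        (fun y => fderiv ℝ (fun y : E => φ (‖y‖ ^ 2)) y (EuclideanSpace.single i 1))
          =ᶠ[nhds x] fun y : E => 2 * φ' (‖y‖ ^ 2) * y i := by
      filter_upwards [isOpen_ne.mem_nhds hx] with y hy
      exact fderiv_comp_norm_sq_single hφ hy i
    rw [first_partial.fderiv_eq, HasFDerivAt.fderiv (f := fun y : E => 2 * φ' (‖y‖ ^ 2) * y i)
      (((hasFDerivAt_comp_norm_sq hφ' hx).const_mul 2).mul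
        (EuclideanSpace.proj i : E →L[ℝ] ℝ).hasFDerivAt)]
    simp [EuclideanSpace.inner_single_right]
    ring
  have sum_sq : ∑ i : Fin d, x i ^ 2 = ‖x‖ ^ 2 := by
    simp [EuclideanSpace.norm_sq_eq]
  simp only [lap, second_partial, Finset.sum_add_distrib, ← Finset.mul_sum, sum_sq]
  simp
  ring

end Radial

theorem norm_rpow_eq_norm_sq_rpow (y : E) (p : ℝ) : ‖y‖ ^ p = (‖y‖ ^ 2) ^ (p / 2) := by
  rw [← Real.rpow_natCast, ← Real.rpow_mul (norm_nonneg y)]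
  ring_nf

theorem lap_const_mul_norm_rpow (c p : ℝ) {x : E} (hx : x ≠ 0) :
    lap d (fun y : E => c * ‖y‖ ^ p) x = c * p * (p + d - 2) * ‖x‖ ^ (p - 2) := by
  have hS : (0 : ℝ) < ‖x‖ ^ 2 := pow_pos (norm_pos_iff.mpr hx) 2
  simp only [norm_rpow_eq_norm_sq_rpow _ p]
  rw [lap_comp_norm_sq (φ := fun t => c * t ^ (p / 2))
      (φ' := fun t => c * (p / 2 * t ^ (p / 2 - 1)))
      (φ'' := fun t => c * (p / 2 * ((p / 2 - 1) * t ^ (p / 2 - 1 - 1))))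
      (fun t ht => (Real.hasDerivAt_rpow_const (Or.inl ht.ne')).const_mul c)
      (fun t ht => ((Real.hasDerivAt_rpow_const (Or.inl ht.ne')).const_mul _).const_mul c) hx,
    Real.rpow_sub_one hS.ne' (p / 2 - 1), norm_rpow_eq_norm_sq_rpow x,
    show (p - 2) / 2 = p / 2 - 1 by ring]
  field_simp
  ring

theorem gradient_const_mul_norm_rpow (c p : ℝ) {x : E} (hx : x ≠ 0) :
    gradient (fun y : E => c * ‖y‖ ^ p) x = (c * p * ‖x‖ ^ (p - 2)) • x := by
  simp only [norm_rpow_eq_norm_sq_rpow _ p]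
  rw [gradient_comp_norm_sq (φ := fun t => c * t ^ (p / 2))
      (φ' := fun t => c * (p / 2 * t ^ (p / 2 - 1)))
      (fun t ht => (Real.hasDerivAt_rpow_const (Or.inl ht.ne')).const_mul c) hx,
    norm_rpow_eq_norm_sq_rpow x, show (p - 2) / 2 = p / 2 - 1 by ring]
  ring_nf

theorem log_norm_eq_half_log_norm_sq (y : E) : Real.log ‖y‖ = Real.log (‖y‖ ^ 2) / 2 := by
  rw [Real.log_pow]
  push_cast
  ring

theorem lap_const_mul_log_norm_add (a b : ℝ) {x : E} (hx : x ≠ 0) :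
    lap d (fun y : E => a * Real.log ‖y‖ + b) x = a * (d - 2) / ‖x‖ ^ 2 := by
  simp only [log_norm_eq_half_log_norm_sq]
  rw [lap_comp_norm_sq (φ := fun t => a * (Real.log t / 2) + b) (φ' := fun t => a * (t⁻¹ / 2))
      (fun t ht => (((Real.hasDerivAt_log ht.ne').div_const 2).const_mul a).add_const b)
      (fun t ht => ((hasDerivAt_inv ht.ne').div_const 2).const_mul a) hx]
  field_simp
  ring

theorem gradient_const_mul_log_norm_add (a b : ℝ) {x : E} (hx : x ≠ 0) :
    gradient (fun y : E => a * Real.log ‖y‖ + b) x = (a / ‖x‖ ^ 2) • x := by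
  simp only [log_norm_eq_half_log_norm_sq]
  rw [gradient_comp_norm_sq (φ := fun t => a * (Real.log t / 2) + b)
      (φ' := fun t => a * (t⁻¹ / 2))
      (fun t ht => (((Real.hasDerivAt_log ht.ne').div_const 2).const_mul a).add_const b) hx]
  congr 1
  field_simp

theorem stmt0_general (d : ℕ) (C : ℝ) :
    ∀ x : EuclideanSpace ℝ (Fin d), x ≠ 0 →
      (lap d (fun y => 8 * ((d : ℝ) - 4) * ((d : ℝ) - 2) / ‖y‖ ^ 4) x
          - divGrad d (fun y => 8 * ((d : ℝ) - 4) * ((d : ℝ) - 2) / ‖y‖ ^ 4)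
              (fun y => -4 * Real.log ‖y‖ + C) x = 0) ∧
      (lap d (fun y => -4 * Real.log ‖y‖ + C) x + 4 * ((d : ℝ) - 2) / ‖x‖ ^ 2 = 0) ∧
      (lap d (fun y => 4 * ((d : ℝ) - 2) / ‖y‖ ^ 2) x
          + 8 * ((d : ℝ) - 4) * ((d : ℝ) - 2) / ‖x‖ ^ 4 = 0) := by
  intro x hx
  have hr : 0 < ‖x‖ := norm_pos_iff.mpr hx
  have div_norm_pow (c : ℝ) (n : ℕ) :
      (fun y : EuclideanSpace ℝ (Fin d) => c / ‖y‖ ^ n) = fun y => c * ‖y‖ ^ (-(n : ℝ)) := by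
    ext y
    rw [Real.rpow_neg (norm_nonneg y), Real.rpow_natCast, div_eq_mul_inv]
  have norm_rpow_neg_sub_two (n : ℕ) : ‖x‖ ^ (-(n : ℝ) - 2) = (‖x‖ ^ (n + 2))⁻¹ := by
    rw [← neg_add', Real.rpow_neg hr.le, ← Real.rpow_natCast]
    push_cast
    ring_nf
  refine ⟨?_, ?_, ?_⟩
  · rw [divGrad, div_norm_pow _ 4, lap_const_mul_norm_rpow _ _ hx,
      gradient_const_mul_norm_rpow _ _ hx, gradient_const_mul_log_norm_add _ _ hx,
      lap_const_mul_log_norm_add _ _ hx,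
      real_inner_smul_left, real_inner_smul_right, real_inner_self_eq_norm_sq,
      norm_rpow_neg_sub_two]
    field_simp
    ring
  · rw [lap_const_mul_log_norm_add _ _ hx]
    ring
  · rw [div_norm_pow _ 2, lap_const_mul_norm_rpow _ _ hx, norm_rpow_neg_sub_two]
    field_simp
    ring

/-- For `d ≥ 7`, the triple
`u_C(x) = 8(d−4)(d−2)‖x‖⁻⁴`, `v_C(x) = −4 log‖x‖ + C`, `w_C(x) = 4(d−2)‖x‖⁻²`
satisfies the stationary chemotaxis system pointwise away from the origin. -/
theorem stmt0 (d : ℕ) (hd : 7 ≤ d) (C : ℝ) :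
    ∀ x : EuclideanSpace ℝ (Fin d), x ≠ 0 →
      (lap d (fun y => 8 * ((d : ℝ) - 4) * ((d : ℝ) - 2) / ‖y‖ ^ 4) x
          - divGrad d (fun y => 8 * ((d : ℝ) - 4) * ((d : ℝ) - 2) / ‖y‖ ^ 4)
              (fun y => -4 * Real.log ‖y‖ + C) x = 0) ∧
      (lap d (fun y => -4 * Real.log ‖y‖ + C) x + 4 * ((d : ℝ) - 2) / ‖x‖ ^ 2 = 0) ∧
      (lap d (fun y => 4 * ((d : ℝ) - 2) / ‖y‖ ^ 2) x
          + 8 * ((d : ℝ) - 4) * ((d : ℝ) - 2) / ‖x‖ ^ 4 = 0) :=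
  stmt0_general d C
end

section
/- Let d ≥ 7 be an integer and let A, B, Cc, C₀ be real numbers with A ≠ 0. Suppose that the functions u(x) = A·‖x‖^{−4}, v(x) = Cc·log‖x‖ + C₀, w(x) = B·‖x‖^{−2} satisfy, at every x ∈ ℝ^d with x ≠ 0, the equations Δu(x) − div(u∇v)(x) = 0, Δv(x) + w(x) = 0, and Δw(x) + u(x) = 0. Then necessarily A = 8(d−4)(d−2), B = 4(d−2), and Cc = −4. -/
/-!
Each profile is radial, `f(x) = h(‖x‖²)`, and for such functions `∇f = 2h'(‖x‖²) x` and
`Δf = 4‖x‖² h''(‖x‖²) + 2d h'(‖x‖²)`. Hence `Δ‖x‖^(-2k) = 2k(2k+2-d)‖x‖^(-2k-2)` and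
`Δ log‖x‖ = (d-2)‖x‖⁻²`, and at a unit vector the three equations become
`(6-d)·A·(Cc+4) = 0`, `(d-2)·Cc + B = 0` and `2(4-d)·B + A = 0`.
Since `A ≠ 0` and `d ≠ 6`, first `Cc = -4`, then `B` and `A` follow.
-/

theorem hasDerivAt_div_pow (c : ℝ) (k : ℕ) {t : ℝ} (ht : t ≠ 0) :
    HasDerivAt (fun s => c / s ^ k) (-(k * c) / t ^ (k + 1)) t := by
  have h := ((hasDerivAt_pow k t).fun_inv (pow_ne_zero k ht)).const_mul c
  simp only [← div_eq_mul_inv] at h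
  refine h.congr_deriv ?_
  rcases k with _ | k
  · simp
  · rw [Nat.add_sub_cancel]
    field_simp
    ring

-- Written with `t ^ 1` so that `hasDerivAt_div_pow` with `k = 1` differentiates it once more.
theorem hasDerivAt_mul_log_add (c C₀ : ℝ) {t : ℝ} (ht : t ≠ 0) :
    HasDerivAt (fun s => c * Real.log s + C₀) (c / t ^ 1) t := by
  simpa [div_eq_mul_inv] using ((Real.hasDerivAt_log ht).const_mul c).add_const C₀

theorem div_norm_pow_eq_comp_norm_sq {E : Type*} [Norm E] (c : ℝ) (k : ℕ) :
    (fun y : E => c / ‖y‖ ^ (2 * k)) = fun y => (fun t => c / t ^ k) (‖y‖ ^ 2) := by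
  simp only [pow_mul]

theorem mul_log_norm_add_eq_comp_norm_sq {E : Type*} [Norm E] (c C₀ : ℝ) :
    (fun y : E => c * Real.log ‖y‖ + C₀)
      = fun y => (fun t => c / 2 * Real.log t + C₀) (‖y‖ ^ 2) := by
  ext y
  simp only [Real.log_pow]
  push_cast
  ring

section RadialCalculus

variable {E : Type*} [NormedAddCommGroup E] [InnerProductSpace ℝ E] {h : ℝ → ℝ} {a : ℝ}

theorem HasDerivAt.hasFDerivAt_comp_norm_sq {x : E} (hh : HasDerivAt h a (‖x‖ ^ 2)) :
    HasFDerivAt (fun z : E => h (‖z‖ ^ 2)) (a • (2 • innerSL ℝ x)) x :=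
  hh.comp_hasFDerivAt x (hasStrictFDerivAt_norm_sq x).hasFDerivAt

theorem HasDerivAt.hasGradientAt_comp_norm_sq [CompleteSpace E] {x : E}
    (hh : HasDerivAt h a (‖x‖ ^ 2)) :
    HasGradientAt (fun z : E => h (‖z‖ ^ 2)) ((2 * a) • x) x := by
  rw [hasGradientAt_iff_hasFDerivAt]
  refine hh.hasFDerivAt_comp_norm_sq.congr_fderiv ?_
  ext v
  simp
  ring

theorem gradient_div_norm_pow [CompleteSpace E] (c : ℝ) (k : ℕ) {x : E} (hx : x ≠ 0) :
    gradient (fun y : E => c / ‖y‖ ^ (2 * k)) x = (-(2 * k * c) / ‖x‖ ^ (2 * k + 2)) • x := by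
  have hx2 : ‖x‖ ^ 2 ≠ 0 := by positivity
  rw [div_norm_pow_eq_comp_norm_sq,
    (hasDerivAt_div_pow c k hx2).hasGradientAt_comp_norm_sq.gradient]
  congr 1
  rw [← pow_mul]
  ring

theorem gradient_mul_log_norm_add [CompleteSpace E] (c C₀ : ℝ) {x : E} (hx : x ≠ 0) :
    gradient (fun y : E => c * Real.log ‖y‖ + C₀) x = (c / ‖x‖ ^ 2) • x := by
  have hx2 : ‖x‖ ^ 2 ≠ 0 := by positivity
  rw [mul_log_norm_add_eq_comp_norm_sq,
    (hasDerivAt_mul_log_add (c / 2) C₀ hx2).hasGradientAt_comp_norm_sq.gradient]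
  congr 1
  ring

end RadialCalculus

section Laplacian

variable {d : ℕ} {x : EuclideanSpace ℝ (Fin d)}

theorem lap_comp_norm_sq_s1 {h h' h'' : ℝ → ℝ}
    (hh : ∀ t, 0 < t → HasDerivAt h (h' t) t) (hh' : ∀ t, 0 < t → HasDerivAt h' (h'' t) t)
    (hx : x ≠ 0) :
    lap d (fun z => h (‖z‖ ^ 2)) x = 4 * ‖x‖ ^ 2 * h'' (‖x‖ ^ 2) + 2 * d * h' (‖x‖ ^ 2) := by
  have second_partial (i : Fin d) :
      fderiv ℝ (fun y => fderiv ℝ (fun z : EuclideanSpace ℝ (Fin d) => h (‖z‖ ^ 2)) y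
        (EuclideanSpace.single i 1)) x (EuclideanSpace.single i 1)
      = 4 * h'' (‖x‖ ^ 2) * x i ^ 2 + 2 * h' (‖x‖ ^ 2) := by
    have first_partial : (fun y => fderiv ℝ (fun z : EuclideanSpace ℝ (Fin d) => h (‖z‖ ^ 2)) y
          (EuclideanSpace.single i 1)) =ᶠ[nhds x] fun y => 2 * (h' (‖y‖ ^ 2) * y i) := by
      filter_upwards [isOpen_compl_singleton.mem_nhds hx] with y hy
      rw [(hh _ (pow_pos (norm_pos_iff.mpr hy) 2)).hasFDerivAt_comp_norm_sq.fderiv]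
      simp [EuclideanSpace.inner_single_right]
      ring
    have hx2 : 0 < ‖x‖ ^ 2 := pow_pos (norm_pos_iff.mpr hx) 2
    have hderiv : HasFDerivAt (fun y : EuclideanSpace ℝ (Fin d) => 2 * (h' (‖y‖ ^ 2) * y i)) _ x :=
      ((hh' _ hx2).hasFDerivAt_comp_norm_sq.mul
        (EuclideanSpace.proj (𝕜 := ℝ) i).hasFDerivAt).const_mul 2
    rw [first_partial.fderiv_eq, hderiv.fderiv]
    simp [EuclideanSpace.inner_single_right]
    ring
  have sum_sq : ∑ i, x i ^ 2 = ‖x‖ ^ 2 := by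
    simp [EuclideanSpace.norm_sq_eq, Real.norm_eq_abs, sq_abs]
  simp only [lap, second_partial, Finset.sum_add_distrib, ← Finset.mul_sum, sum_sq,
    Finset.sum_const, Finset.card_univ, Fintype.card_fin, nsmul_eq_mul]
  ring

theorem lap_div_norm_pow (c : ℝ) (k : ℕ) (hx : x ≠ 0) :
    lap d (fun y => c / ‖y‖ ^ (2 * k)) x = 2 * k * (2 * k + 2 - d) * c / ‖x‖ ^ (2 * k + 2) := by
  have hx2 : ‖x‖ ^ 2 ≠ 0 := by positivity
  rw [div_norm_pow_eq_comp_norm_sq,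
    lap_comp_norm_sq_s1 (fun t ht => hasDerivAt_div_pow c k ht.ne')
      (fun t ht => hasDerivAt_div_pow _ (k + 1) ht.ne') hx]
  field_simp
  push_cast
  ring

theorem lap_mul_log_norm_add (c C₀ : ℝ) (hx : x ≠ 0) :
    lap d (fun y => c * Real.log ‖y‖ + C₀) x = (d - 2) * c / ‖x‖ ^ 2 := by
  have hx2 : ‖x‖ ^ 2 ≠ 0 := by positivity
  rw [mul_log_norm_add_eq_comp_norm_sq,
    lap_comp_norm_sq_s1 (fun t ht => hasDerivAt_mul_log_add (c / 2) C₀ ht.ne')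
      (fun t ht => hasDerivAt_div_pow _ 1 ht.ne') hx]
  field_simp
  ring

end Laplacian

/-- For `d ≥ 7`, if the homogeneous profiles
`u(x) = A‖x‖⁻⁴`, `v(x) = Cc·log‖x‖ + C₀`, `w(x) = B‖x‖⁻²` with `A ≠ 0` solve the
stationary chemotaxis system away from the origin, then
`A = 8(d−4)(d−2)`, `B = 4(d−2)` and `Cc = −4`. -/
theorem stmt1 (d : ℕ) (hd : 7 ≤ d) (A B Cc C₀ : ℝ) (hA : A ≠ 0)
    (heq : ∀ x : EuclideanSpace ℝ (Fin d), x ≠ 0 →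
      (lap d (fun y => A / ‖y‖ ^ 4) x
          - divGrad d (fun y => A / ‖y‖ ^ 4)
              (fun y => Cc * Real.log ‖y‖ + C₀) x = 0) ∧
      (lap d (fun y => Cc * Real.log ‖y‖ + C₀) x + B / ‖x‖ ^ 2 = 0) ∧
      (lap d (fun y => B / ‖y‖ ^ 2) x + A / ‖x‖ ^ 4 = 0)) :
    A = 8 * ((d : ℝ) - 4) * ((d : ℝ) - 2) ∧ B = 4 * ((d : ℝ) - 2) ∧ Cc = -4 := by
  obtain ⟨x, hx⟩ : ∃ x : EuclideanSpace ℝ (Fin d), ‖x‖ = 1 :=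
    ⟨EuclideanSpace.single ⟨0, by omega⟩ 1, by simp⟩
  have hx0 : x ≠ 0 := norm_ne_zero_iff.mp (by simp [hx])
  have lap_u : lap d (fun y => A / ‖y‖ ^ 4) x = 4 * (6 - d) * A :=
    (lap_div_norm_pow A 2 hx0).trans (by rw [hx]; push_cast; ring)
  have lap_v : lap d (fun y => Cc * Real.log ‖y‖ + C₀) x = (d - 2) * Cc := by
    simpa [hx] using lap_mul_log_norm_add Cc C₀ hx0
  have lap_w : lap d (fun y => B / ‖y‖ ^ 2) x = 2 * (4 - d) * B :=
    (lap_div_norm_pow B 1 hx0).trans (by rw [hx]; push_cast; ring)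
  have grad_u : gradient (fun y => A / ‖y‖ ^ 4) x = (-(4 * A)) • x :=
    (gradient_div_norm_pow A 2 hx0).trans (by rw [hx]; push_cast; ring_nf)
  have grad_v : gradient (fun y => Cc * Real.log ‖y‖ + C₀) x = Cc • x := by
    simpa [hx] using gradient_mul_log_norm_add Cc C₀ hx0
  obtain ⟨hu, hv, hw⟩ := heq x hx0
  rw [divGrad, lap_u, lap_v, grad_u, grad_v, real_inner_smul_left, real_inner_smul_right,
    real_inner_self_eq_norm_sq, hx] at hu
  rw [lap_v, hx] at hv
  rw [lap_w, hx] at hw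
  have hd6 : (6 - d : ℝ) ≠ 0 := by
    have : (7 : ℝ) ≤ d := by exact_mod_cast hd
    linarith
  have hCc : Cc = -4 := by
    have : (6 - d) * A * (Cc + 4) = 0 := by linear_combination hu
    simpa [hd6, hA, add_eq_zero_iff_eq_neg] using this
  have hB : B = 4 * (d - 2) := by linear_combination hv - (d - 2) * hCc
  exact ⟨by linear_combination hw - 2 * (4 - d) * hB, hB, hCc⟩
end

section
/- (Comparison principle for the mass-function system, whole half-line case.) Let d ≥ 1 be an integer and T > 0. Let M̲, M̄, W̲, W̄ : [0,∞)×[0,T) → ℝ be continuous, continuously differentiable on [0,∞)×(0,T), twice continuously differentiable in r on (0,∞)×(0,T), and bounded on [0,∞)×[0,T₀] for every T₀ < T. Assume that either (r·∂_r M̲ + d·M̲ ≥ 0 on (0,∞)×(0,T) and sup_{(r,t)∈(0,∞)×(0,T₀)} |r·∂_r M̲(r,t)| < ∞ for every T₀ < T) or (r·∂_r M̄ + d·M̄ ≥ 0 on (0,∞)×(0,T) and sup_{(r,t)∈(0,∞)×(0,T₀)} |r·∂_r M̄(r,t)| < ∞ for every T₀ < T). Assume that for all (r,t) ∈ (0,∞)×(0,T):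 ∂_t M̲ − ∂_{rr} M̲ − ((d+1)/r)∂_r M̲ − r·(∂_r M̲)·W̲ − d·M̲·W̲ ≤ ∂_t M̄ − ∂_{rr} M̄ − ((d+1)/r)∂_r M̄ − r·(∂_r M̄)·W̄ − d·M̄·W̄, and ∂_t W̲ − ∂_{rr} W̲ − ((d+1)/r)∂_r W̲ − M̲ ≤ ∂_t W̄ − ∂_{rr} W̄ − ((d+1)/r)∂_r W̄ − M̄. If M̲(r,0) ≤ M̄(r,0) and W̲(r,0) ≤ W̄(r,0) for all r > 0, then M̲(r,t) ≤ M̄(r,t) and W̲(r,t) ≤ W̄(r,t) for all (r,t) ∈ (0,∞)×[0,T). -/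
/-!
Put `m = M̄ - M̲` and `w = W̄ - W̲`. Subtracting the two differential inequalities and
linearising the product `W u` (with `u = r M_r + d M`) around the solution whose density is
controlled, on every `(0,∞) × (0,T₀]` with `T₀ < T` both components satisfy
`f_t ≥ f_rr + (d+1)/r f_r - B |r f_r + d f| - C g⁻`, `g` being the other component,
and start nonnegative. For such a system the barrier `ψ = ε e^{κt} (1 + r² + r^{-d})` is, for
large `κ`, a strict supersolution, and it dominates the bounded functions `m, w` near `r = 0` and
`r = ∞`. If `m + ψ` or `w + ψ` became negative, it would have a first zero in a compact
rectangle; there it has an interior minimum in `r` and a minimum from the left in `t`, and the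
resulting signs of its derivatives contradict the strict supersolution inequality.
Letting `ε → 0` gives `m, w ≥ 0`.
-/

/-- Partial derivative in the time variable. -/
noncomputable def pderivT (f : ℝ → ℝ → ℝ) (r t : ℝ) : ℝ := deriv (fun s => f r s) t

/-- Partial derivative in the radial variable. -/
noncomputable def pderivR (f : ℝ → ℝ → ℝ) (r t : ℝ) : ℝ := deriv (fun ρ => f ρ t) r

/-- Second partial derivative in the radial variable. -/
noncomputable def pderivRR (f : ℝ → ℝ → ℝ) (r t : ℝ) : ℝ := deriv (fun ρ => pderivR f ρ t) r

/-- Regularity for the mass functions: continuous on `[0,∞) × [0,T)`, continuously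
differentiable on `[0,∞) × (0,T)`, twice continuously differentiable in `r` on
`(0,∞) × (0,T)`, and bounded on `[0,∞) × [0,T₀]` for every `T₀ < T`. -/
def MassReg (f : ℝ → ℝ → ℝ) (T : ℝ) : Prop :=
  ContinuousOn (fun p : ℝ × ℝ => f p.1 p.2) (Set.Ici 0 ×ˢ Set.Ico 0 T) ∧
  (∀ r ∈ Set.Ici (0 : ℝ), ∀ t ∈ Set.Ioo (0 : ℝ) T, DifferentiableAt ℝ (fun s => f r s) t) ∧
  (∀ r ∈ Set.Ici (0 : ℝ), ∀ t ∈ Set.Ioo (0 : ℝ) T, DifferentiableAt ℝ (fun ρ => f ρ t) r) ∧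
  ContinuousOn (fun p : ℝ × ℝ => pderivT f p.1 p.2) (Set.Ici 0 ×ˢ Set.Ioo 0 T) ∧
  ContinuousOn (fun p : ℝ × ℝ => pderivR f p.1 p.2) (Set.Ici 0 ×ˢ Set.Ioo 0 T) ∧
  (∀ r ∈ Set.Ioi (0 : ℝ), ∀ t ∈ Set.Ioo (0 : ℝ) T,
    DifferentiableAt ℝ (fun ρ => pderivR f ρ t) r) ∧
  ContinuousOn (fun p : ℝ × ℝ => pderivRR f p.1 p.2) (Set.Ioi 0 ×ˢ Set.Ioo 0 T) ∧
  (∀ T₀ < T, ∃ Cb : ℝ, ∀ r ∈ Set.Ici (0 : ℝ), ∀ t ∈ Set.Icc 0 T₀, |f r t| ≤ Cb)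

open Set Filter Topology

/-- If `g'' < 0`, the second derivative test makes `a` a local maximum as well, so `g` is
locally constant and `g'' = 0`. -/
lemma IsLocalMin.nonneg_of_hasDerivAt_deriv {g g' : ℝ → ℝ} {a g'' : ℝ} (hmin : IsLocalMin g a)
    (hg : ∀ᶠ x in 𝓝 a, HasDerivAt g (g' x) x) (hg' : HasDerivAt g' g'' a) : 0 ≤ g'' := by
  by_contra! hneg
  have hderiv : deriv g =ᶠ[𝓝 a] g' := hg.mono fun x hx => hx.deriv
  have hmax : IsLocalMax g a :=
    isLocalMax_of_deriv_deriv_neg (by rwa [hderiv.deriv_eq, hg'.deriv])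
      (by rw [hderiv.eq_of_nhds]; exact hmin.hasDerivAt_eq_zero hg.self_of_nhds)
      hg.self_of_nhds.continuousAt
  have hconst : ∀ᶠ x in 𝓝 a, g x = g a := (hmin.and hmax).mono fun x hx => le_antisymm hx.2 hx.1
  have hzero : g' =ᶠ[𝓝 a] fun _ => 0 := by
    filter_upwards [hg, hconst.eventually_nhds] with x hx hcx
    exact hx.unique ((hasDerivAt_const x (g a)).congr_of_eventuallyEq hcx)
  exact hneg.ne (hg'.unique ((hasDerivAt_const a 0).congr_of_eventuallyEq hzero))

lemma IsMinOn.hasDerivAt_nonpos_of_Icc {g : ℝ → ℝ} {a b g' : ℝ} (hab : a < b)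
    (hmin : IsMinOn g (Icc a b) b) (hg : HasDerivAt g g' b) : g' ≤ 0 := by
  have hcone : a - b ∈ posTangentConeAt (Icc a b) b :=
    sub_mem_posTangentConeAt_of_segment_subset
      ((convex_Icc a b).segment_subset (right_mem_Icc.2 hab.le) (left_mem_Icc.2 hab.le))
  have := hmin.localize.hasFDerivWithinAt_nonneg hg.hasDerivWithinAt.hasFDerivWithinAt hcone
  simp only [ContinuousLinearMap.toSpanSingleton_apply, smul_eq_mul] at this
  exact nonpos_of_mul_nonneg_right this (sub_neg.2 hab)

lemma exists_first_zero {K : Set ℝ} (hK : IsCompact K) {T₀ : ℝ} {F : ℝ → ℝ → ℝ}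
    (hF : ContinuousOn (fun p : ℝ × ℝ => F p.1 p.2) (K ×ˢ Icc 0 T₀))
    (h0 : ∀ r ∈ K, 0 < F r 0) (hneg : ∃ r ∈ K, ∃ t ∈ Icc 0 T₀, F r t < 0) :
    ∃ s ∈ K, ∃ t₀ ∈ Ioc 0 T₀, F s t₀ = 0 ∧ ∀ r ∈ K, ∀ t ∈ Icc 0 t₀, 0 ≤ F r t := by
  set S := K ×ˢ Icc 0 T₀ ∩ (fun p : ℝ × ℝ => F p.1 p.2) ⁻¹' Iic 0
  have hS : IsCompact S := (hK.prod isCompact_Icc).of_isClosed_subset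
    (hF.preimage_isClosed_of_isClosed (hK.isClosed.prod isClosed_Icc) isClosed_Iic)
    inter_subset_left
  obtain ⟨r, hr, t, ht, hFt⟩ := hneg
  obtain ⟨p, ⟨hpK, hpF : F p.1 p.2 ≤ 0⟩, hpmin⟩ :=
    hS.exists_isMinOn ⟨(r, t), ⟨hr, ht⟩, hFt.le⟩ continuousOn_snd
  have hearlier : ∀ q ∈ K ×ˢ Icc 0 T₀, q.2 < p.2 → 0 < F q.1 q.2 := fun q hq hlt => by
    by_contra! hq'
    exact (hpmin ⟨hq, hq'⟩ : p.2 ≤ q.2).not_gt hlt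
  have hp₀ : 0 < p.2 := by
    refine hpK.2.1.lt_of_ne fun h => ?_
    have hF0 : F p.1 p.2 = F p.1 0 := by rw [← h]
    linarith [h0 p.1 hpK.1]
  have hcl : closure (K ×ˢ Ico 0 p.2) = K ×ˢ Icc 0 p.2 := by
    rw [closure_prod_eq, hK.isClosed.closure_eq, closure_Ico hp₀.ne]
  have hbefore : ∀ r ∈ K, ∀ t ∈ Icc 0 p.2, 0 ≤ F r t := fun r hr t ht =>
    le_on_closure (f := fun _ => 0) (g := fun q : ℝ × ℝ => F q.1 q.2)
      (fun q hq => (hearlier q ⟨hq.1, hq.2.1, hq.2.2.le.trans hpK.2.2⟩ hq.2.2).le)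
      continuousOn_const
      (hF.mono (hcl ▸ fun q hq => ⟨hq.1, hq.2.1, hq.2.2.trans hpK.2.2⟩))
      (hcl ▸ ⟨hr, ht⟩ : (r, t) ∈ closure (K ×ˢ Ico 0 p.2))
  exact ⟨p.1, hpK.1, p.2, ⟨hp₀, hpK.2.2⟩,
    le_antisymm hpF (hbefore _ hpK.1 _ ⟨hp₀.le, le_rfl⟩), hbefore⟩

structure HasPartialDerivs (f ft fr frr : ℝ → ℝ → ℝ) (T₀ : ℝ) : Prop where
  hasDerivAt_time : ∀ r > 0, ∀ t ∈ Ioc 0 T₀, HasDerivAt (f r ·) (ft r t) t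
  hasDerivAt_radial : ∀ r > 0, ∀ t ∈ Ioc 0 T₀, HasDerivAt (f · t) (fr r t) r
  hasDerivAt_radial_radial : ∀ r > 0, ∀ t ∈ Ioc 0 T₀, HasDerivAt (fr · t) (frr r t) r

namespace HasPartialDerivs

variable {f ft fr frr g gt gr grr : ℝ → ℝ → ℝ} {T₀ : ℝ}

lemma add (hf : HasPartialDerivs f ft fr frr T₀) (hg : HasPartialDerivs g gt gr grr T₀) :
    HasPartialDerivs (fun r t => f r t + g r t) (fun r t => ft r t + gt r t)
      (fun r t => fr r t + gr r t) (fun r t => frr r t + grr r t) T₀ where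
  hasDerivAt_time r hr t ht := (hf.hasDerivAt_time r hr t ht).add (hg.hasDerivAt_time r hr t ht)
  hasDerivAt_radial r hr t ht :=
    (hf.hasDerivAt_radial r hr t ht).add (hg.hasDerivAt_radial r hr t ht)
  hasDerivAt_radial_radial r hr t ht :=
    (hf.hasDerivAt_radial_radial r hr t ht).add (hg.hasDerivAt_radial_radial r hr t ht)

lemma sub (hf : HasPartialDerivs f ft fr frr T₀) (hg : HasPartialDerivs g gt gr grr T₀) :
    HasPartialDerivs (fun r t => f r t - g r t) (fun r t => ft r t - gt r t)
      (fun r t => fr r t - gr r t) (fun r t => frr r t - grr r t) T₀ where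
  hasDerivAt_time r hr t ht := (hf.hasDerivAt_time r hr t ht).sub (hg.hasDerivAt_time r hr t ht)
  hasDerivAt_radial r hr t ht :=
    (hf.hasDerivAt_radial r hr t ht).sub (hg.hasDerivAt_radial r hr t ht)
  hasDerivAt_radial_radial r hr t ht :=
    (hf.hasDerivAt_radial_radial r hr t ht).sub (hg.hasDerivAt_radial_radial r hr t ht)

end HasPartialDerivs

lemma HasPartialDerivs.touch {g gt gr grr : ℝ → ℝ → ℝ} {T₀ s t₀ : ℝ}
    (hg : HasPartialDerivs g gt gr grr T₀) (hs : 0 < s) (ht₀ : t₀ ∈ Ioc 0 T₀)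
    (hrow : IsMinOn (g · t₀) (Ioi 0) s) (hcol : IsMinOn (g s ·) (Icc 0 t₀) t₀) :
    gr s t₀ = 0 ∧ 0 ≤ grr s t₀ ∧ gt s t₀ ≤ 0 := by
  have hmin : IsLocalMin (g · t₀) s := hrow.isLocalMin (Ioi_mem_nhds hs)
  have hderiv : ∀ᶠ x in 𝓝 s, HasDerivAt (g · t₀) (gr x t₀) x :=
    eventually_of_mem (Ioi_mem_nhds hs) fun x hx => hg.hasDerivAt_radial x hx t₀ ht₀
  exact ⟨hmin.hasDerivAt_eq_zero hderiv.self_of_nhds,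
    hmin.nonneg_of_hasDerivAt_deriv hderiv (hg.hasDerivAt_radial_radial s hs t₀ ht₀),
    hcol.hasDerivAt_nonpos_of_Icc ht₀.1 (hg.hasDerivAt_time s hs t₀ ht₀)⟩

/-- A coefficient-free form of `f_t ≥ f_rr + (D+1)/r f_r + V (r f_r + D f) + c g` for
coefficients `|V| ≤ B` and `0 ≤ c ≤ C`. -/
def IsRadialSupersolution (D B C T₀ : ℝ) (f ft fr frr g : ℝ → ℝ → ℝ) : Prop :=
  ∀ r > 0, ∀ t ∈ Ioc 0 T₀,
    frr r t + (D + 1) / r * fr r t - B * |r * fr r t + D * f r t| - C * (g r t)⁻ ≤ ft r t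

lemma IsRadialSupersolution.add_barrier_ne_zero {f ft fr frr g φ φt φr φrr : ℝ → ℝ → ℝ}
    {D B C T₀ s t₀ : ℝ} (hsup : IsRadialSupersolution D B C T₀ f ft fr frr g) (hC : 0 ≤ C)
    (hf : HasPartialDerivs f ft fr frr T₀) (hφ : HasPartialDerivs φ φt φr φrr T₀)
    (hs : 0 < s) (ht₀ : t₀ ∈ Ioc 0 T₀) (hφpos : 0 ≤ φ s t₀)
    (hφflux : 0 ≤ s * φr s t₀ + D * φ s t₀)
    (hφsup : φrr s t₀ + (D + 1) / s * φr s t₀ + B * (s * φr s t₀ + D * φ s t₀)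
      + C * φ s t₀ < φt s t₀)
    (hrow : ∀ x > 0, 0 ≤ f x t₀ + φ x t₀) (hcol : ∀ t ∈ Icc 0 t₀, 0 ≤ f s t + φ s t)
    (hg : 0 ≤ g s t₀ + φ s t₀) : f s t₀ + φ s t₀ ≠ 0 := by
  intro hzero
  obtain ⟨hr, hrr, ht⟩ := (hf.add hφ).touch hs ht₀ (fun x hx => hzero.trans_le (hrow x hx))
    (fun t ht => hzero.trans_le (hcol t ht))
  have hfr : fr s t₀ = -φr s t₀ := by linarith
  have hflux : |s * fr s t₀ + D * f s t₀| = s * φr s t₀ + D * φ s t₀ := by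
    rw [hfr, show f s t₀ = -φ s t₀ by linarith, ← abs_neg]
    convert abs_of_nonneg hφflux using 2; ring
  have hneg : C * (g s t₀)⁻ ≤ C * φ s t₀ :=
    mul_le_mul_of_nonneg_left ((negPart_def _).trans_le (sup_le (by linarith) hφpos)) hC
  have := hsup s hs t₀ ht₀
  rw [hflux, hfr] at this
  linarith

theorem nonneg_add_of_barrier {m mt mr mrr w wt wr wrr φ φt φr φrr : ℝ → ℝ → ℝ}
    {D B C K T₀ : ℝ} (hC : 0 ≤ C)
    (hm : HasPartialDerivs m mt mr mrr T₀) (hw : HasPartialDerivs w wt wr wrr T₀)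
    (hφ : HasPartialDerivs φ φt φr φrr T₀)
    (hmc : ContinuousOn (fun p : ℝ × ℝ => m p.1 p.2) (Ioi 0 ×ˢ Icc 0 T₀))
    (hwc : ContinuousOn (fun p : ℝ × ℝ => w p.1 p.2) (Ioi 0 ×ˢ Icc 0 T₀))
    (hφc : ContinuousOn (fun p : ℝ × ℝ => φ p.1 p.2) (Ioi 0 ×ˢ Icc 0 T₀))
    (hK : ∀ r > 0, ∀ t ∈ Icc 0 T₀, |m r t| ≤ K ∧ |w r t| ≤ K)
    (hm_sup : IsRadialSupersolution D B C T₀ m mt mr mrr w)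
    (hw_sup : IsRadialSupersolution D B C T₀ w wt wr wrr m)
    (hinit : ∀ r > 0, 0 ≤ m r 0 ∧ 0 ≤ w r 0)
    (hφpos : ∀ r > 0, ∀ t ∈ Icc 0 T₀, 0 < φ r t)
    (hφflux : ∀ r > 0, ∀ t ∈ Ioc 0 T₀, 0 ≤ r * φr r t + D * φ r t)
    (hφsup : ∀ r > 0, ∀ t ∈ Ioc 0 T₀, φrr r t + (D + 1) / r * φr r t
      + B * (r * φr r t + D * φ r t) + C * φ r t < φt r t)
    (hφlarge : ∃ δ > 0, ∃ R, ∀ r > 0, r ∉ Icc δ R → ∀ t ∈ Icc 0 T₀, K < φ r t) :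
    ∀ r > 0, ∀ t ∈ Icc 0 T₀, 0 ≤ m r t + φ r t ∧ 0 ≤ w r t + φ r t := by
  obtain ⟨δ, hδ, R, hout⟩ := hφlarge
  set F : ℝ → ℝ → ℝ := fun r t => min (m r t + φ r t) (w r t + φ r t)
  have hsplit : ∀ t' ≤ T₀, (∀ r ∈ Icc δ R, ∀ t ∈ Icc 0 t', 0 ≤ F r t) →
      ∀ r > 0, ∀ t ∈ Icc 0 t', 0 ≤ m r t + φ r t ∧ 0 ≤ w r t + φ r t := by
    intro t' ht' hF r hr t ht
    have htT : t ∈ Icc 0 T₀ := ⟨ht.1, ht.2.trans ht'⟩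
    by_cases hrK : r ∈ Icc δ R
    · exact le_min_iff.1 (hF r hrK t ht)
    · have := hout r hr hrK t htT
      have := hK r hr t htT
      constructor <;> linarith [neg_abs_le (m r t), neg_abs_le (w r t)]
  refine hsplit T₀ le_rfl ?_
  by_contra! hneg
  have hT₀ : 0 ≤ T₀ := by obtain ⟨-, -, t, ht, -⟩ := hneg; exact ht.1.trans ht.2
  have hKpos : Icc δ R ⊆ Ioi 0 := fun r hr => hδ.trans_le hr.1
  have hFc : ContinuousOn (fun p : ℝ × ℝ => F p.1 p.2) (Icc δ R ×ˢ Icc 0 T₀) :=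
    ((hmc.add hφc).inf (hwc.add hφc)).mono (prod_mono hKpos subset_rfl)
  have hF0 : ∀ r ∈ Icc δ R, 0 < F r 0 := fun r hr => by
    have := hinit r (hKpos hr)
    have := hφpos r (hKpos hr) 0 ⟨le_rfl, hT₀⟩
    exact lt_min (by linarith) (by linarith)
  obtain ⟨s, hs, t₀, ht₀, hzero, hbefore⟩ := exists_first_zero isCompact_Icc hFc hF0 hneg
  have hs₀ : 0 < s := hKpos hs
  have hglob := hsplit t₀ ht₀.2 hbefore
  have ht₀' : t₀ ∈ Icc 0 t₀ := ⟨ht₀.1.le, le_rfl⟩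
  have hφs := (hφpos s hs₀ t₀ ⟨ht₀.1.le, ht₀.2⟩).le
  rcases min_choice (m s t₀ + φ s t₀) (w s t₀ + φ s t₀) with h | h
  · exact hm_sup.add_barrier_ne_zero hC hm hφ hs₀ ht₀ hφs (hφflux s hs₀ t₀ ht₀)
      (hφsup s hs₀ t₀ ht₀) (fun x hx => (hglob x hx t₀ ht₀').1)
      (fun t ht => (hglob s hs₀ t ht).1) (hglob s hs₀ t₀ ht₀').2 (h.symm.trans hzero)
  · exact hw_sup.add_barrier_ne_zero hC hw hφ hs₀ ht₀ hφs (hφflux s hs₀ t₀ ht₀)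
      (hφsup s hs₀ t₀ ht₀) (fun x hx => (hglob x hx t₀ ht₀').2)
      (fun t ht => (hglob s hs₀ t ht).2) (hglob s hs₀ t₀ ht₀').1 (h.symm.trans hzero)

/-- `r^{-D}` is annihilated both by `∂_rr + (D+1)/r ∂_r` and by `r ∂_r + D`, so it costs nothing
in the supersolution inequality while making the barrier blow up at `r = 0`. -/
noncomputable def barrierProfile (D r : ℝ) : ℝ := 1 + r ^ 2 + r ^ (-D)

lemma hasDerivAt_barrierProfile {D r : ℝ} (hr : r ≠ 0) :
    HasDerivAt (barrierProfile D) (2 * r - D * r ^ (-D) / r) r := by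
  refine (((hasDerivAt_pow 2 r).const_add 1).add
    (Real.hasDerivAt_rpow_const (p := -D) (.inl hr))).congr_deriv ?_
  rw [Real.rpow_sub_one hr]
  push_cast
  ring

lemma hasDerivAt_deriv_barrierProfile {D r : ℝ} (hr : r ≠ 0) :
    HasDerivAt (fun x => 2 * x - D * x ^ (-D) / x) (2 + D * (D + 1) * r ^ (-D) / r ^ 2) r := by
  refine (((hasDerivAt_id r).const_mul 2).sub
    (((Real.hasDerivAt_rpow_const (p := -D) (.inl hr)).const_mul D).div
      (hasDerivAt_id r) hr)).congr_deriv ?_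
  rw [Real.rpow_sub_one hr]
  simp only [id]
  field_simp
  ring

lemma one_lt_barrierProfile {D r : ℝ} (hr : 0 < r) : 1 < barrierProfile D r := by
  have := Real.rpow_pos_of_pos hr (-D)
  unfold barrierProfile
  linarith [sq_nonneg r]

lemma exists_lt_barrierProfile {D : ℝ} (hD : 0 < D) (K : ℝ) :
    ∃ δ > 0, ∃ R, ∀ r > 0, r ∉ Icc δ R → K < barrierProfile D r := by
  obtain ⟨u, hu : 0 < u, hsub⟩ := mem_nhdsGT_iff_exists_Ioo_subset.1
    ((tendsto_rpow_neg_nhdsGT_zero (neg_neg_of_pos hD)).eventually_gt_atTop K)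
  refine ⟨u / 2, half_pos hu, max K 1, fun r hr hrK => ?_⟩
  have hp := Real.rpow_pos_of_pos hr (-D)
  unfold barrierProfile
  rcases not_and_or.1 hrK with hsmall | hlarge
  · have : K < r ^ (-D) := hsub ⟨hr, by linarith [not_le.1 hsmall, half_lt_self hu]⟩
    linarith [sq_nonneg r]
  · have h1 : max K 1 < r := not_le.1 hlarge
    have : r ≤ r ^ 2 := by nlinarith [le_max_right K 1]
    linarith [le_max_left K 1]

noncomputable def barrier (D κ ε r t : ℝ) : ℝ := ε * Real.exp (κ * t) * barrierProfile D r

lemma hasPartialDerivs_barrier (D κ ε T₀ : ℝ) :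
    HasPartialDerivs (barrier D κ ε) (fun r t => κ * barrier D κ ε r t)
      (fun r t => ε * Real.exp (κ * t) * (2 * r - D * r ^ (-D) / r))
      (fun r t => ε * Real.exp (κ * t) * (2 + D * (D + 1) * r ^ (-D) / r ^ 2)) T₀ where
  hasDerivAt_time r _ t _ := by
    refine ((((hasDerivAt_id t).const_mul κ).exp.const_mul ε).mul_const
      (barrierProfile D r)).congr_deriv ?_
    simp only [barrier, id, mul_one]
    ring
  hasDerivAt_radial r hr t _ := (hasDerivAt_barrierProfile hr.ne').const_mul _
  hasDerivAt_radial_radial r hr t _ := (hasDerivAt_deriv_barrierProfile hr.ne').const_mul _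

lemma continuousOn_barrier (D κ ε : ℝ) (S : Set ℝ) :
    ContinuousOn (fun p : ℝ × ℝ => barrier D κ ε p.1 p.2) (Ioi 0 ×ˢ S) := by
  have hrpow : ContinuousOn (fun p : ℝ × ℝ => p.1 ^ (-D)) (Ioi 0 ×ˢ S) :=
    continuousOn_fst.rpow_const fun p hp => .inl (ne_of_gt hp.1)
  unfold barrier barrierProfile
  fun_prop

lemma exists_lt_barrier {D κ ε : ℝ} (hD : 0 < D) (hκ : 0 ≤ κ) (hε : 0 < ε) (K : ℝ) :
    ∃ δ > 0, ∃ R, ∀ r > 0, r ∉ Icc δ R → ∀ t ≥ 0, K < barrier D κ ε r t := by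
  obtain ⟨δ, hδ, R, hlarge⟩ := exists_lt_barrierProfile hD (K / ε)
  refine ⟨δ, hδ, R, fun r hr hrK t ht => ?_⟩
  have hρ := hlarge r hr hrK
  have hexp : 1 ≤ Real.exp (κ * t) := Real.one_le_exp (mul_nonneg hκ ht)
  have hρpos := one_lt_barrierProfile (D := D) hr
  calc K = ε * (K / ε) := by field_simp
    _ < ε * barrierProfile D r := mul_lt_mul_of_pos_left hρ hε
    _ ≤ barrier D κ ε r t := by
      unfold barrier
      nlinarith [mul_le_mul_of_nonneg_left hexp hε.le]

lemma barrier_pos {D κ ε r t : ℝ} (hε : 0 < ε) (hr : 0 < r) : 0 < barrier D κ ε r t :=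
  mul_pos (mul_pos hε (Real.exp_pos _)) (zero_lt_one.trans (one_lt_barrierProfile hr))

lemma barrier_flux_nonneg {D κ ε r t : ℝ} (hD : 0 ≤ D) (hε : 0 ≤ ε) (hr : 0 < r) :
    0 ≤ r * (ε * Real.exp (κ * t) * (2 * r - D * r ^ (-D) / r)) + D * barrier D κ ε r t := by
  have hflux : r * (ε * Real.exp (κ * t) * (2 * r - D * r ^ (-D) / r)) + D * barrier D κ ε r t
      = ε * Real.exp (κ * t) * (D + (D + 2) * r ^ 2) := by
    unfold barrier barrierProfile
    field_simp
    ring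
  rw [hflux]
  positivity

lemma barrier_supersolution {D B C κ ε r t : ℝ} (hD : 0 < D) (hB : 0 ≤ B) (hε : 0 < ε)
    (hr : 0 < r) (hκ : 2 * D + 4 + B * (D + 2) + C ≤ κ) :
    ε * Real.exp (κ * t) * (2 + D * (D + 1) * r ^ (-D) / r ^ 2)
        + (D + 1) / r * (ε * Real.exp (κ * t) * (2 * r - D * r ^ (-D) / r))
        + B * (r * (ε * Real.exp (κ * t) * (2 * r - D * r ^ (-D) / r)) + D * barrier D κ ε r t)
        + C * barrier D κ ε r t
      < κ * barrier D κ ε r t := by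
  have hE : 0 < ε * Real.exp (κ * t) := mul_pos hε (Real.exp_pos _)
  have hp := Real.rpow_pos_of_pos hr (-D)
  have hlhs : ε * Real.exp (κ * t) * (2 + D * (D + 1) * r ^ (-D) / r ^ 2)
        + (D + 1) / r * (ε * Real.exp (κ * t) * (2 * r - D * r ^ (-D) / r))
        + B * (r * (ε * Real.exp (κ * t) * (2 * r - D * r ^ (-D) / r)) + D * barrier D κ ε r t)
        + C * barrier D κ ε r t
      = ε * Real.exp (κ * t) * (2 * D + 4 + B * (D + (D + 2) * r ^ 2)
        + C * barrierProfile D r) := by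
    unfold barrier barrierProfile
    field_simp
    ring
  have hρ : 2 * D + 4 + B * (D + (D + 2) * r ^ 2) + C * barrierProfile D r
      < κ * barrierProfile D r := by
    have h1 := one_lt_barrierProfile (D := D) hr
    have h2 : (2 * D + 4 + B * (D + 2) + C) * barrierProfile D r ≤ κ * barrierProfile D r :=
      mul_le_mul_of_nonneg_right hκ (by linarith)
    unfold barrierProfile at *
    nlinarith [sq_nonneg r, mul_nonneg hB hp.le]
  have := mul_lt_mul_of_pos_left hρ hE
  rw [hlhs, barrier]
  linarith

lemma nonneg_of_forall_pos_add_mul {a X : ℝ} (h : ∀ ε > 0, 0 ≤ a + ε * X) : 0 ≤ a := by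
  have hlim : Tendsto (fun ε => a + ε * X) (𝓝[>] 0) (𝓝 a) := by
    have : Continuous fun ε : ℝ => a + ε * X := by fun_prop
    simpa using this.continuousWithinAt.tendsto (x := 0) (s := Ioi 0)
  exact ge_of_tendsto hlim (eventually_nhdsWithin_of_forall h)

theorem nonneg_of_isRadialSupersolution {m mt mr mrr w wt wr wrr : ℝ → ℝ → ℝ} {D B C T₀ : ℝ}
    (hD : 0 < D) (hB : 0 ≤ B) (hC : 0 ≤ C)
    (hm : HasPartialDerivs m mt mr mrr T₀) (hw : HasPartialDerivs w wt wr wrr T₀)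
    (hmc : ContinuousOn (fun p : ℝ × ℝ => m p.1 p.2) (Ioi 0 ×ˢ Icc 0 T₀))
    (hwc : ContinuousOn (fun p : ℝ × ℝ => w p.1 p.2) (Ioi 0 ×ˢ Icc 0 T₀))
    (hmb : ∃ K, ∀ r > 0, ∀ t ∈ Icc 0 T₀, |m r t| ≤ K)
    (hwb : ∃ K, ∀ r > 0, ∀ t ∈ Icc 0 T₀, |w r t| ≤ K)
    (hm_sup : IsRadialSupersolution D B C T₀ m mt mr mrr w)
    (hw_sup : IsRadialSupersolution D B C T₀ w wt wr wrr m)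
    (hinit : ∀ r > 0, 0 ≤ m r 0 ∧ 0 ≤ w r 0) :
    ∀ r > 0, ∀ t ∈ Icc 0 T₀, 0 ≤ m r t ∧ 0 ≤ w r t := by
  obtain ⟨Km, hKm⟩ := hmb
  obtain ⟨Kw, hKw⟩ := hwb
  set κ := 2 * D + 4 + B * (D + 2) + C
  have hκ : 0 ≤ κ := by positivity
  have hbarrier : ∀ ε > 0, ∀ r > 0, ∀ t ∈ Icc 0 T₀,
      0 ≤ m r t + barrier D κ ε r t ∧ 0 ≤ w r t + barrier D κ ε r t := fun ε hε => by
    obtain ⟨δ, hδ, R, hlarge⟩ := exists_lt_barrier hD hκ hε (max Km Kw)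
    exact nonneg_add_of_barrier hC hm hw (hasPartialDerivs_barrier D κ ε T₀) hmc hwc
      (continuousOn_barrier D κ ε _)
      (fun r hr t ht => ⟨(hKm r hr t ht).trans (le_max_left _ _),
        (hKw r hr t ht).trans (le_max_right _ _)⟩)
      hm_sup hw_sup hinit (fun r hr _ _ => barrier_pos hε hr)
      (fun r hr _ _ => barrier_flux_nonneg hD.le hε.le hr)
      (fun r hr _ _ => barrier_supersolution hD hB hε hr le_rfl)
      ⟨δ, hδ, R, fun r hr hrK t ht => hlarge r hr hrK t ht.1⟩
  intro r hr t ht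
  constructor <;>
    refine nonneg_of_forall_pos_add_mul (X := Real.exp (κ * t) * barrierProfile D r)
      fun ε hε => ?_
  · simpa only [barrier, mul_assoc] using (hbarrier ε hε r hr t ht).1
  · simpa only [barrier, mul_assoc] using (hbarrier ε hε r hr t ht).2

noncomputable def cellDensity (D : ℝ) (f : ℝ → ℝ → ℝ) (r t : ℝ) : ℝ :=
  r * pderivR f r t + D * f r t

def HasControlledDensity (D T : ℝ) (f : ℝ → ℝ → ℝ) : Prop :=
  (∀ r ∈ Ioi (0 : ℝ), ∀ t ∈ Ioo (0 : ℝ) T, 0 ≤ cellDensity D f r t) ∧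
    ∀ T₀ < T, ∃ Cb : ℝ, ∀ r ∈ Ioi (0 : ℝ), ∀ t ∈ Ioo (0 : ℝ) T₀, |r * pderivR f r t| ≤ Cb

namespace MassReg

variable {f g : ℝ → ℝ → ℝ} {T T₀ : ℝ}

lemma hasPartialDerivs (hf : MassReg f T) (hT₀ : T₀ < T) :
    HasPartialDerivs f (pderivT f) (pderivR f) (pderivRR f) T₀ := by
  obtain ⟨-, hdt, hdr, -, -, hdrr, -, -⟩ := hf
  have hIoo : ∀ t ∈ Ioc 0 T₀, t ∈ Ioo 0 T := fun t ht => ⟨ht.1, ht.2.trans_lt hT₀⟩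
  exact ⟨fun r hr t ht => (hdt r hr.le t (hIoo t ht)).hasDerivAt,
    fun r hr t ht => (hdr r hr.le t (hIoo t ht)).hasDerivAt,
    fun r hr t ht => (hdrr r hr t (hIoo t ht)).hasDerivAt⟩

lemma continuousOn (hf : MassReg f T) (hT₀ : T₀ < T) :
    ContinuousOn (fun p : ℝ × ℝ => f p.1 p.2) (Ioi 0 ×ˢ Icc 0 T₀) :=
  hf.1.mono (prod_mono Ioi_subset_Ici_self fun _ ht => ⟨ht.1, ht.2.trans_lt hT₀⟩)

lemma exists_abs_le (hf : MassReg f T) (hT₀ : T₀ < T) :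
    ∃ K, ∀ r > 0, ∀ t ∈ Icc 0 T₀, |f r t| ≤ K := by
  obtain ⟨-, -, -, -, -, -, -, hbdd⟩ := hf
  obtain ⟨K, hK⟩ := hbdd T₀ hT₀
  exact ⟨K, fun r hr => hK r hr.le⟩

lemma exists_abs_sub_le (hf : MassReg f T) (hg : MassReg g T) (hT₀ : T₀ < T) :
    ∃ K, ∀ r > 0, ∀ t ∈ Icc 0 T₀, |f r t - g r t| ≤ K := by
  obtain ⟨Kf, hKf⟩ := hf.exists_abs_le hT₀
  obtain ⟨Kg, hKg⟩ := hg.exists_abs_le hT₀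
  exact ⟨Kf + Kg, fun r hr t ht =>
    (abs_sub _ _).trans (add_le_add (hKf r hr t ht) (hKg r hr t ht))⟩

lemma exists_coeff_bound {D : ℝ} (hf : MassReg f T) (hg : MassReg g T)
    (hdens : HasControlledDensity D T f) (hT₀ : T₀ < T) :
    ∃ B C, 0 ≤ B ∧ 1 ≤ C ∧ ∀ r > 0, ∀ t ∈ Ioc 0 T₀,
      0 ≤ cellDensity D f r t ∧ cellDensity D f r t ≤ C ∧ |g r t| ≤ B := by
  obtain ⟨hpos, hbnd⟩ := hdens
  obtain ⟨T₁, hT₀₁, hT₁⟩ := exists_between hT₀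
  obtain ⟨Cb, hCb⟩ := hbnd T₁ hT₁
  obtain ⟨Kf, hKf⟩ := hf.exists_abs_le hT₀
  obtain ⟨Kg, hKg⟩ := hg.exists_abs_le hT₀
  refine ⟨max Kg 0, max (Cb + |D| * Kf) 1, le_max_right _ _, le_max_right _ _,
    fun r hr t ht => ⟨hpos r hr t ⟨ht.1, ht.2.trans_lt hT₀⟩, ?_,
      (hKg r hr t (Ioc_subset_Icc_self ht)).trans (le_max_left _ _)⟩⟩
  have hfr := (le_abs_self _).trans (hCb r hr t ⟨ht.1, ht.2.trans_lt hT₀₁⟩)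
  have hDf : D * f r t ≤ |D| * Kf := (le_abs_self _).trans <| (abs_mul _ _).trans_le <|
    mul_le_mul_of_nonneg_left (hKf r hr t (Ioc_subset_Icc_self ht)) (abs_nonneg D)
  exact le_max_of_le_left (by unfold cellDensity; linarith)

end MassReg

/-- `yu xu - yl xl` is `yu (xu - xl) + xl (yu - yl)` and also `yl (xu - xl) + xu (yu - yl)`:
the two linearisations of `W u`, according to which density is controlled. -/
lemma neg_le_mul_sub_mul {xu xl yu yl B C : ℝ}
    (h : (0 ≤ xl ∧ xl ≤ C ∧ |yu| ≤ B) ∨ (0 ≤ xu ∧ xu ≤ C ∧ |yl| ≤ B)) :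
    -(B * |xu - xl|) - C * (yu - yl)⁻ ≤ yu * xu - yl * xl := by
  have hneg := neg_le_negPart (yu - yl)
  have hneg0 := negPart_nonneg (yu - yl)
  rcases h with ⟨h0, hC, hB⟩ | ⟨h0, hC, hB⟩
  · nlinarith [neg_abs_le (yu * (xu - xl)), abs_mul yu (xu - xl),
      mul_le_mul_of_nonneg_right hB (abs_nonneg (xu - xl)), mul_le_mul_of_nonneg_left hneg h0,
      mul_le_mul_of_nonneg_right hC hneg0]
  · nlinarith [neg_abs_le (yl * (xu - xl)), abs_mul yl (xu - xl),
      mul_le_mul_of_nonneg_right hB (abs_nonneg (xu - xl)), mul_le_mul_of_nonneg_left hneg h0,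
      mul_le_mul_of_nonneg_right hC hneg0]

lemma neg_mul_abs_sub_mul_negPart_le {B C : ℝ} (hB : 0 ≤ B) (hC : 1 ≤ C) (x y : ℝ) :
    -(B * |x|) - C * y⁻ ≤ y := by
  nlinarith [mul_nonneg hB (abs_nonneg x), neg_le_negPart y, negPart_nonneg y]

lemma exists_linearization_bound {D T T₀ : ℝ} {Ml Mu Wl Wu : ℝ → ℝ → ℝ}
    (hMl : MassReg Ml T) (hMu : MassReg Mu T) (hWl : MassReg Wl T) (hWu : MassReg Wu T)
    (hdens : HasControlledDensity D T Ml ∨ HasControlledDensity D T Mu) (hT₀ : T₀ < T) :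
    ∃ B C, 0 ≤ B ∧ 1 ≤ C ∧ ∀ r > 0, ∀ t ∈ Ioc 0 T₀,
      -(B * |cellDensity D Mu r t - cellDensity D Ml r t|) - C * (Wu r t - Wl r t)⁻
        ≤ Wu r t * cellDensity D Mu r t - Wl r t * cellDensity D Ml r t := by
  rcases hdens with hdens | hdens
  · obtain ⟨B, C, hB, hC, h⟩ := hMl.exists_coeff_bound hWu hdens hT₀
    exact ⟨B, C, hB, hC, fun r hr t ht => neg_le_mul_sub_mul (.inl (h r hr t ht))⟩
  · obtain ⟨B, C, hB, hC, h⟩ := hMu.exists_coeff_bound hWl hdens hT₀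
    exact ⟨B, C, hB, hC, fun r hr t ht => neg_le_mul_sub_mul (.inr (h r hr t ht))⟩

theorem stmt4_general (d : ℕ) (hd : 1 ≤ d) (T : ℝ)
    (Ml Mu Wl Wu : ℝ → ℝ → ℝ)
    (hMl : MassReg Ml T) (hMu : MassReg Mu T) (hWl : MassReg Wl T) (hWu : MassReg Wu T)
    (hflux :
      ((∀ r ∈ Set.Ioi (0 : ℝ), ∀ t ∈ Set.Ioo (0 : ℝ) T,
          0 ≤ r * pderivR Ml r t + (d : ℝ) * Ml r t) ∧
        (∀ T₀ < T, ∃ Cb : ℝ, ∀ r ∈ Set.Ioi (0 : ℝ), ∀ t ∈ Set.Ioo (0 : ℝ) T₀,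
          |r * pderivR Ml r t| ≤ Cb)) ∨
      ((∀ r ∈ Set.Ioi (0 : ℝ), ∀ t ∈ Set.Ioo (0 : ℝ) T,
          0 ≤ r * pderivR Mu r t + (d : ℝ) * Mu r t) ∧
        (∀ T₀ < T, ∃ Cb : ℝ, ∀ r ∈ Set.Ioi (0 : ℝ), ∀ t ∈ Set.Ioo (0 : ℝ) T₀,
          |r * pderivR Mu r t| ≤ Cb)))
    (hineq1 : ∀ r ∈ Set.Ioi (0 : ℝ), ∀ t ∈ Set.Ioo (0 : ℝ) T,
      pderivT Ml r t - pderivRR Ml r t - ((d : ℝ) + 1) / r * pderivR Ml r t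
          - r * pderivR Ml r t * Wl r t - (d : ℝ) * Ml r t * Wl r t
        ≤ pderivT Mu r t - pderivRR Mu r t - ((d : ℝ) + 1) / r * pderivR Mu r t
          - r * pderivR Mu r t * Wu r t - (d : ℝ) * Mu r t * Wu r t)
    (hineq2 : ∀ r ∈ Set.Ioi (0 : ℝ), ∀ t ∈ Set.Ioo (0 : ℝ) T,
      pderivT Wl r t - pderivRR Wl r t - ((d : ℝ) + 1) / r * pderivR Wl r t - Ml r t
        ≤ pderivT Wu r t - pderivRR Wu r t - ((d : ℝ) + 1) / r * pderivR Wu r t - Mu r t)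
    (hinit : ∀ r ∈ Set.Ioi (0 : ℝ), Ml r 0 ≤ Mu r 0 ∧ Wl r 0 ≤ Wu r 0) :
    ∀ r ∈ Set.Ioi (0 : ℝ), ∀ t ∈ Set.Ico (0 : ℝ) T, Ml r t ≤ Mu r t ∧ Wl r t ≤ Wu r t := by
  intro r hr t ht
  obtain ⟨T₀, htT₀, hT₀T⟩ := exists_between ht.2
  have hIoo : ∀ t ∈ Ioc 0 T₀, t ∈ Ioo 0 T := fun t ht => ⟨ht.1, ht.2.trans_lt hT₀T⟩
  obtain ⟨B, C, hB, hC, hcoef⟩ := exists_linearization_bound hMl hMu hWl hWu hflux hT₀T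
  suffices key : ∀ r > 0, ∀ t ∈ Icc 0 T₀, 0 ≤ Mu r t - Ml r t ∧ 0 ≤ Wu r t - Wl r t from
    (key r hr t ⟨ht.1, htT₀.le⟩).imp sub_nonneg.1 sub_nonneg.1
  refine nonneg_of_isRadialSupersolution (Nat.cast_pos.2 hd : (0 : ℝ) < d) hB (by linarith)
    ((hMu.hasPartialDerivs hT₀T).sub (hMl.hasPartialDerivs hT₀T))
    ((hWu.hasPartialDerivs hT₀T).sub (hWl.hasPartialDerivs hT₀T))
    ((hMu.continuousOn hT₀T).sub (hMl.continuousOn hT₀T))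
    ((hWu.continuousOn hT₀T).sub (hWl.continuousOn hT₀T))
    (hMu.exists_abs_sub_le hMl hT₀T) (hWu.exists_abs_sub_le hWl hT₀T)
    (fun r hr t ht => ?_) (fun r hr t ht => ?_)
    (fun r hr => ⟨sub_nonneg.2 (hinit r hr).1, sub_nonneg.2 (hinit r hr).2⟩)
  · have h1 := hineq1 r hr t (hIoo t ht)
    have h2 := hcoef r hr t ht
    unfold cellDensity at h2
    rw [show r * (pderivR Mu r t - pderivR Ml r t) + d * (Mu r t - Ml r t)
      = r * pderivR Mu r t + d * Mu r t - (r * pderivR Ml r t + d * Ml r t) by ring]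
    linarith
  · have h1 := hineq2 r hr t (hIoo t ht)
    have h2 := neg_mul_abs_sub_mul_negPart_le hB hC
      (r * (pderivR Wu r t - pderivR Wl r t) + d * (Wu r t - Wl r t)) (Mu r t - Ml r t)
    linarith

/-- Comparison principle for the mass-function system on `(0,∞)`. -/
theorem stmt4 (d : ℕ) (hd : 1 ≤ d) (T : ℝ) (hT : 0 < T)
    (Ml Mu Wl Wu : ℝ → ℝ → ℝ)
    (hMl : MassReg Ml T) (hMu : MassReg Mu T) (hWl : MassReg Wl T) (hWu : MassReg Wu T)
    (hflux :
      ((∀ r ∈ Set.Ioi (0 : ℝ), ∀ t ∈ Set.Ioo (0 : ℝ) T,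
          0 ≤ r * pderivR Ml r t + (d : ℝ) * Ml r t) ∧
        (∀ T₀ < T, ∃ Cb : ℝ, ∀ r ∈ Set.Ioi (0 : ℝ), ∀ t ∈ Set.Ioo (0 : ℝ) T₀,
          |r * pderivR Ml r t| ≤ Cb)) ∨
      ((∀ r ∈ Set.Ioi (0 : ℝ), ∀ t ∈ Set.Ioo (0 : ℝ) T,
          0 ≤ r * pderivR Mu r t + (d : ℝ) * Mu r t) ∧
        (∀ T₀ < T, ∃ Cb : ℝ, ∀ r ∈ Set.Ioi (0 : ℝ), ∀ t ∈ Set.Ioo (0 : ℝ) T₀,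
          |r * pderivR Mu r t| ≤ Cb)))
    (hineq1 : ∀ r ∈ Set.Ioi (0 : ℝ), ∀ t ∈ Set.Ioo (0 : ℝ) T,
      pderivT Ml r t - pderivRR Ml r t - ((d : ℝ) + 1) / r * pderivR Ml r t
          - r * pderivR Ml r t * Wl r t - (d : ℝ) * Ml r t * Wl r t
        ≤ pderivT Mu r t - pderivRR Mu r t - ((d : ℝ) + 1) / r * pderivR Mu r t
          - r * pderivR Mu r t * Wu r t - (d : ℝ) * Mu r t * Wu r t)
    (hineq2 : ∀ r ∈ Set.Ioi (0 : ℝ), ∀ t ∈ Set.Ioo (0 : ℝ) T,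
      pderivT Wl r t - pderivRR Wl r t - ((d : ℝ) + 1) / r * pderivR Wl r t - Ml r t
        ≤ pderivT Wu r t - pderivRR Wu r t - ((d : ℝ) + 1) / r * pderivR Wu r t - Mu r t)
    (hinit : ∀ r ∈ Set.Ioi (0 : ℝ), Ml r 0 ≤ Mu r 0 ∧ Wl r 0 ≤ Wu r 0) :
    ∀ r ∈ Set.Ioi (0 : ℝ), ∀ t ∈ Set.Ico (0 : ℝ) T, Ml r t ≤ Mu r t ∧ Wl r t ≤ Wu r t :=
  stmt4_general d hd T Ml Mu Wl Wu hMl hMu hWl hWu hflux hineq1 hineq2 hinit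
end

section
/- (Comparison principle for the mass-function system, bounded interval case.) Let d ≥ 1 be an integer, T > 0 and 0 < R < ∞. Let M̲, M̄, W̲, W̄ : [0,R]×[0,T) → ℝ be continuous, continuously differentiable on [0,R]×(0,T), twice continuously differentiable in r on (0,R)×(0,T), and bounded on [0,R]×[0,T₀] for every T₀ < T. Assume that either (r·∂_r M̲ + d·M̲ ≥ 0 on (0,R)×(0,T) and sup_{(r,t)∈(0,R)×(0,T₀)} |r·∂_r M̲(r,t)| < ∞ for every T₀ < T) or (r·∂_r M̄ + d·M̄ ≥ 0 on (0,R)×(0,T) and sup_{(r,t)∈(0,R)×(0,T₀)} |r·∂_r M̄(r,t)| < ∞ for every T₀ < T). Assume that for all (r,t) ∈ (0,R)×(0,T): ∂_t M̲ − ∂_{rr} M̲ − ((d+1)/r)∂_r M̲ − r·(∂_r M̲)·W̲ − d·M̲·W̲ ≤ ∂_t M̄ − ∂_{rr} M̄ − ((d+1)/r)∂_r M̄ − r·(∂_r M̄)·W̄ − d·M̄·W̄, and ∂_t W̲ − ∂_{rr} W̲ − ((d+1)/r)∂_r W̲ − M̲ ≤ ∂_t W̄ − ∂_{rr} W̄ −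 ((d+1)/r)∂_r W̄ − M̄. If M̲(r,0) ≤ M̄(r,0) and W̲(r,0) ≤ W̄(r,0) for all r ∈ (0,R), and M̲(R,t) ≤ M̄(R,t) and W̲(R,t) ≤ W̄(R,t) for all t ∈ (0,T), then M̲ ≤ M̄ and W̲ ≤ W̄ on (0,R)×[0,T). -/
/-!
Put `U = M̄ - M̲` and `V = W̄ - W̲`. The nonlinearity of the mass equation is `(r ∂ᵣM + d M) W`,
so subtracting the two differential inequalities makes `(U, V)` a supersolution of a linear
cooperative system: `U` is driven by `c V` with `c = r ∂ᵣM + d M ≥ 0` (of whichever of `M̲, M̄`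
carries the sign condition), and `V` by `U`.

For such a system one follows the weighted functions `r ^ d U + ε e^(K t)` and
`r ^ d V + ε e^(K t)`; the weight `r ^ d` turns `M` into the un-normalised mass, so no
condition is needed at `r = 0`. At the first time one of them reaches zero on `[0, R] × [0, T₀]`,
the point is interior; there the first-order condition in `r` kills the drift term
`r ∂ᵣU + d U`, the second-order condition makes the radial Laplacian nonnegative, and the time
derivative is nonpositive. This forces `K ≤ C`, where `C` bounds the coupling coefficients, so
`K = C + 1` is impossible. Letting `ε → 0` gives `U, V ≥ 0`.
-/

open Set Filter Topology

/-- Regularity for the mass functions on the bounded interval `[0,R]`: continuous on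
`[0,R] × [0,T)`, continuously differentiable on `[0,R] × (0,T)`, twice continuously
differentiable in `r` on `(0,R) × (0,T)`, bounded on `[0,R] × [0,T₀]` for every `T₀ < T`. -/
def MassRegI (f : ℝ → ℝ → ℝ) (R T : ℝ) : Prop :=
  ContinuousOn (fun p : ℝ × ℝ => f p.1 p.2) (Set.Icc 0 R ×ˢ Set.Ico 0 T) ∧
  (∀ r ∈ Set.Icc (0 : ℝ) R, ∀ t ∈ Set.Ioo (0 : ℝ) T, DifferentiableAt ℝ (fun s => f r s) t) ∧
  (∀ r ∈ Set.Icc (0 : ℝ) R, ∀ t ∈ Set.Ioo (0 : ℝ) T, DifferentiableAt ℝ (fun ρ => f ρ t) r) ∧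
  ContinuousOn (fun p : ℝ × ℝ => pderivT f p.1 p.2) (Set.Icc 0 R ×ˢ Set.Ioo 0 T) ∧
  ContinuousOn (fun p : ℝ × ℝ => pderivR f p.1 p.2) (Set.Icc 0 R ×ˢ Set.Ioo 0 T) ∧
  (∀ r ∈ Set.Ioo (0 : ℝ) R, ∀ t ∈ Set.Ioo (0 : ℝ) T,
    DifferentiableAt ℝ (fun ρ => pderivR f ρ t) r) ∧
  ContinuousOn (fun p : ℝ × ℝ => pderivRR f p.1 p.2) (Set.Ioo 0 R ×ˢ Set.Ioo 0 T) ∧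
  (∀ T₀ < T, ∃ Cb : ℝ, ∀ r ∈ Set.Icc (0 : ℝ) R, ∀ t ∈ Set.Icc 0 T₀, |f r t| ≤ Cb)

theorem IsLocalMin.deriv_deriv_nonneg {f : ℝ → ℝ} {x : ℝ} (h : IsLocalMin f x)
    (hc : ContinuousAt f x) : 0 ≤ deriv (deriv f) x := by
  by_contra! hneg
  have hconst : f =ᶠ[𝓝 x] fun _ => f x := by
    filter_upwards [h, isLocalMax_of_deriv_deriv_neg hneg h.deriv_eq_zero hc] with y h₁ h₂
    exact le_antisymm h₂ h₁
  have : deriv (deriv f) x = 0 := by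
    rw [hconst.deriv.deriv_eq]
    simp
  linarith

theorem hasDerivAt_pow_mul {d : ℕ} {f : ℝ → ℝ} {x : ℝ} (hx : x ≠ 0)
    (hf : DifferentiableAt ℝ f x) :
    HasDerivAt (fun y => y ^ d * f y) (x ^ d * x⁻¹ * (x * deriv f x + d * f x)) x := by
  refine ((hasDerivAt_pow d x).mul hf.hasDerivAt).congr_deriv ?_
  rcases d.eq_zero_or_pos with rfl | hd
  · simp [hx]
  · rw [pow_sub₀ x hx hd, pow_one]
    field_simp
    ring

section

variable {d : ℕ} {f : ℝ → ℝ} {p : ℝ}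

theorem IsLocalMin.mul_deriv_add_eq_zero_of_pow_mul (h : IsLocalMin (fun x => x ^ d * f x) p)
    (hp : 0 < p) (hf : DifferentiableAt ℝ f p) : p * deriv f p + d * f p = 0 := by
  simpa [hp.ne'] using h.hasDerivAt_eq_zero (hasDerivAt_pow_mul hp.ne' hf)

theorem IsLocalMin.radialLaplacian_nonneg_of_pow_mul (h : IsLocalMin (fun x => x ^ d * f x) p)
    (hp : 0 < p) (hf : ∀ᶠ x in 𝓝 p, DifferentiableAt ℝ f x)
    (hf' : DifferentiableAt ℝ (deriv f) p) :
    0 ≤ deriv (deriv f) p + (d + 1) / p * deriv f p := by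
  have hdensity := h.mul_deriv_add_eq_zero_of_pow_mul hp hf.self_of_nhds
  have hderiv : deriv (fun x => x ^ d * f x) =ᶠ[𝓝 p]
      fun x => x ^ d * x⁻¹ * (x * deriv f x + d * f x) := by
    filter_upwards [hf, eventually_ne_nhds hp.ne'] with x hfx hx
    exact (hasDerivAt_pow_mul hx hfx).deriv
  have hdensity' : HasDerivAt (fun x => x * deriv f x + d * f x)
      (p * (deriv (deriv f) p + (d + 1) / p * deriv f p)) p :=
    (((hasDerivAt_id p).mul hf'.hasDerivAt).add
      (hf.self_of_nhds.hasDerivAt.const_mul (d : ℝ))).congr_deriv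
      (by field_simp; simp only [id]; ring)
  have hsecond : HasDerivAt (fun x => x ^ d * x⁻¹ * (x * deriv f x + d * f x))
      (p ^ d * p⁻¹ * p * (deriv (deriv f) p + (d + 1) / p * deriv f p)) p :=
    (((hasDerivAt_pow d p).mul (hasDerivAt_inv hp.ne')).mul hdensity').congr_deriv
      (by rw [hdensity]; simp only [Pi.mul_apply]; ring)
  have hnonneg := h.deriv_deriv_nonneg
    ((continuous_pow d).continuousAt.mul hf.self_of_nhds.continuousAt)
  rw [hderiv.deriv_eq, hsecond.deriv] at hnonneg
  exact nonneg_of_mul_nonneg_right hnonneg (by positivity)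

end

theorem IsLocalMinOn.hasDerivAt_nonpos_of_Iic {f : ℝ → ℝ} {f' a : ℝ}
    (h : IsLocalMinOn f (Iic a) a) (hf : HasDerivAt f f' a) : f' ≤ 0 := by
  have hseg : segment ℝ a (a + -1) ⊆ Iic a := by
    rw [segment_symm, segment_eq_Icc (by linarith)]
    exact Icc_subset_Iic_self
  simpa using h.hasFDerivWithinAt_nonneg hf.hasFDerivAt.hasFDerivWithinAt
    (mem_posTangentConeAt_of_segment_subset hseg)

theorem IsCompact.exists_nonpos_forall_snd_lt_pos {X : Type*} [TopologicalSpace X]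
    {K : Set (X × ℝ)} (hK : IsCompact K) {χ : X × ℝ → ℝ} (hχ : LowerSemicontinuousOn χ K)
    (hne : ∃ q ∈ K, χ q ≤ 0) : ∃ q ∈ K, χ q ≤ 0 ∧ ∀ q' ∈ K, q'.2 < q.2 → 0 < χ q' := by
  obtain ⟨q, ⟨hqK, hq⟩, hmin⟩ :=
    (hχ.isCompact_inter_preimage_Iic hK 0).exists_isMinOn hne continuous_snd.continuousOn
  refine ⟨q, hqK, hq, fun q' hq' hlt => ?_⟩
  by_contra! h
  exact (hmin ⟨hq', h⟩).not_gt hlt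

theorem exists_interior_first_zero {χ : ℝ × ℝ → ℝ} {R T₀ : ℝ}
    (hχ : ContinuousOn χ (Icc 0 R ×ˢ Icc 0 T₀)) (hbot : ∀ r ∈ Icc 0 R, 0 < χ (r, 0))
    (hside : ∀ t ∈ Ioc 0 T₀, 0 < χ (0, t) ∧ 0 < χ (R, t))
    (hneg : ∃ q ∈ Icc 0 R ×ˢ Icc 0 T₀, χ q ≤ 0) :
    ∃ p ∈ Ioo 0 R, ∃ ts ∈ Ioc 0 T₀, χ (p, ts) = 0 ∧ (∀ r ∈ Icc 0 R, 0 ≤ χ (r, ts)) ∧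
      ∀ s ∈ Ico 0 ts, 0 < χ (p, s) := by
  obtain ⟨⟨p, ts⟩, ⟨hpR, htsT₀⟩, hle, hfirst⟩ :=
    (isCompact_Icc.prod isCompact_Icc).exists_nonpos_forall_snd_lt_pos
      hχ.lowerSemicontinuousOn hneg
  have hts : 0 < ts := htsT₀.1.lt_of_ne fun h0 => hle.not_gt (h0 ▸ hbot p hpR)
  have hbefore (r : ℝ) (hr : r ∈ Icc 0 R) (s : ℝ) (hs : s ∈ Ico 0 ts) : 0 < χ (r, s) :=
    hfirst (r, s) ⟨hr, hs.1, hs.2.le.trans htsT₀.2⟩ hs.2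
  have hat (r : ℝ) (hr : r ∈ Icc 0 R) : 0 ≤ χ (r, ts) := by
    have hcont : ContinuousOn (fun s => χ (r, s)) (Icc 0 T₀) :=
      hχ.comp (continuous_const.prodMk continuous_id).continuousOn fun s hs => ⟨hr, hs⟩
    refine ContinuousWithinAt.closure_le (f := fun _ => 0) (g := fun s => χ (r, s))
      (s := Ico 0 ts) ?_ continuousWithinAt_const
      ((hcont ts htsT₀).mono fun s hs => ⟨hs.1, hs.2.le.trans htsT₀.2⟩)
      fun s hs => (hbefore r hr s hs).le
    rw [closure_Ico hts.ne]
    exact right_mem_Icc.mpr hts.le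
  refine ⟨p, ⟨hpR.1.lt_of_ne ?_, hpR.2.lt_of_ne ?_⟩, ts, ⟨hts, htsT₀.2⟩,
    le_antisymm hle (hat p hpR), hat, hbefore p hpR⟩
  · rintro rfl
    exact hle.not_gt (hside ts ⟨hts, htsT₀.2⟩).1
  · rintro rfl
    exact hle.not_gt (hside ts ⟨hts, htsT₀.2⟩).2

theorem nonneg_of_forall_pos_lt_add_mul {x A : ℝ} (hA : 0 < A) (h : ∀ ε > 0, 0 < x + ε * A) :
    0 ≤ x :=
  le_of_forall_pos_lt_add fun δ hδ => by
    simpa [div_mul_cancel₀ _ hA.ne'] using h (δ / A) (div_pos hδ hA)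

-- The part of `MassRegI` the argument uses; unlike `MassRegI` it is stable under subtraction.
structure RadialRegular (f : ℝ → ℝ → ℝ) (R T : ℝ) : Prop where
  continuousOn : ContinuousOn (fun q : ℝ × ℝ => f q.1 q.2) (Icc 0 R ×ˢ Ico 0 T)
  differentiableAt_time : ∀ r ∈ Ioo 0 R, ∀ t ∈ Ioo 0 T, DifferentiableAt ℝ (fun s => f r s) t
  differentiableAt_radial : ∀ r ∈ Ioo 0 R, ∀ t ∈ Ioo 0 T, DifferentiableAt ℝ (fun ρ => f ρ t) r
  differentiableAt_pderivR :
    ∀ r ∈ Ioo 0 R, ∀ t ∈ Ioo 0 T, DifferentiableAt ℝ (fun ρ => pderivR f ρ t) r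

theorem MassRegI.radialRegular {f : ℝ → ℝ → ℝ} {R T : ℝ} (h : MassRegI f R T) :
    RadialRegular f R T where
  continuousOn := h.1
  differentiableAt_time r hr := h.2.1 r (Ioo_subset_Icc_self hr)
  differentiableAt_radial r hr := h.2.2.1 r (Ioo_subset_Icc_self hr)
  differentiableAt_pderivR := h.2.2.2.2.2.1

-- The Laplacian of a radial function on `ℝ^(d + 2)`.
noncomputable def radialLaplacian (d : ℕ) (f : ℝ → ℝ → ℝ) (r t : ℝ) : ℝ :=
  pderivRR f r t + ((d : ℝ) + 1) / r * pderivR f r t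

-- For a mass function `M`, `r ∂ᵣM + d M` is the density `u`.
noncomputable def massDensity (d : ℕ) (f : ℝ → ℝ → ℝ) (r t : ℝ) : ℝ :=
  r * pderivR f r t + (d : ℝ) * f r t

namespace RadialRegular

variable {R T r t : ℝ} {f g : ℝ → ℝ → ℝ}

theorem eventually_differentiableAt_radial (hf : RadialRegular f R T) (hr : r ∈ Ioo 0 R)
    (ht : t ∈ Ioo 0 T) : ∀ᶠ ρ in 𝓝 r, DifferentiableAt ℝ (fun ρ => f ρ t) ρ := by
  filter_upwards [Ioo_mem_nhds hr.1 hr.2] with ρ hρ using hf.differentiableAt_radial ρ hρ t ht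

theorem pderivT_sub (hf : RadialRegular f R T) (hg : RadialRegular g R T) (hr : r ∈ Ioo 0 R)
    (ht : t ∈ Ioo 0 T) :
    pderivT (fun r t => f r t - g r t) r t = pderivT f r t - pderivT g r t :=
  deriv_sub (hf.differentiableAt_time r hr t ht) (hg.differentiableAt_time r hr t ht)

theorem pderivR_sub_eventuallyEq (hf : RadialRegular f R T) (hg : RadialRegular g R T)
    (hr : r ∈ Ioo 0 R) (ht : t ∈ Ioo 0 T) :
    (fun ρ => pderivR (fun r t => f r t - g r t) ρ t) =ᶠ[𝓝 r]
      fun ρ => pderivR f ρ t - pderivR g ρ t := by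
  filter_upwards [hf.eventually_differentiableAt_radial hr ht,
    hg.eventually_differentiableAt_radial hr ht] with ρ hfρ hgρ using deriv_sub hfρ hgρ

theorem sub (hf : RadialRegular f R T) (hg : RadialRegular g R T) :
    RadialRegular (fun r t => f r t - g r t) R T where
  continuousOn := hf.continuousOn.sub hg.continuousOn
  differentiableAt_time r hr t ht :=
    (hf.differentiableAt_time r hr t ht).sub (hg.differentiableAt_time r hr t ht)
  differentiableAt_radial r hr t ht :=
    (hf.differentiableAt_radial r hr t ht).sub (hg.differentiableAt_radial r hr t ht)
  differentiableAt_pderivR r hr t ht :=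
    (pderivR_sub_eventuallyEq hf hg hr ht).differentiableAt_iff.mpr
      ((hf.differentiableAt_pderivR r hr t ht).sub (hg.differentiableAt_pderivR r hr t ht))

theorem massDensity_sub (d : ℕ) (hf : RadialRegular f R T) (hg : RadialRegular g R T)
    (hr : r ∈ Ioo 0 R) (ht : t ∈ Ioo 0 T) :
    massDensity d (fun r t => f r t - g r t) r t = massDensity d f r t - massDensity d g r t := by
  simp only [massDensity, pderivR_sub_eventuallyEq hf hg hr ht |>.eq_of_nhds]
  ring

theorem radialLaplacian_sub (d : ℕ) (hf : RadialRegular f R T) (hg : RadialRegular g R T)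
    (hr : r ∈ Ioo 0 R) (ht : t ∈ Ioo 0 T) :
    radialLaplacian d (fun r t => f r t - g r t) r t =
      radialLaplacian d f r t - radialLaplacian d g r t := by
  have hRR : pderivRR (fun r t => f r t - g r t) r t = pderivRR f r t - pderivRR g r t :=
    (pderivR_sub_eventuallyEq hf hg hr ht).deriv_eq.trans
      (deriv_sub (hf.differentiableAt_pderivR r hr t ht) (hg.differentiableAt_pderivR r hr t ht))
  simp only [radialLaplacian, hRR, pderivR_sub_eventuallyEq hf hg hr ht |>.eq_of_nhds]
  ring

theorem nonneg_initial_of_Ioo (hf : RadialRegular f R T) (hT : 0 < T)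
    (h : ∀ r ∈ Ioo 0 R, 0 ≤ f r 0) : ∀ r ∈ Ioc 0 R, 0 ≤ f r 0 := by
  intro r hr
  rcases hr.2.lt_or_eq with hlt | rfl
  · exact h r ⟨hr.1, hlt⟩
  have hcont : ContinuousOn (fun ρ => f ρ 0) (Icc 0 r) :=
    hf.continuousOn.comp (continuous_id.prodMk continuous_const).continuousOn
      fun ρ hρ => ⟨hρ, left_mem_Ico.mpr hT⟩
  refine ContinuousWithinAt.closure_le (f := fun _ => 0) (g := fun ρ => f ρ 0) ?_
    continuousWithinAt_const
    ((hcont r (right_mem_Icc.mpr hr.1.le)).mono Ioo_subset_Icc_self) h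
  rw [closure_Ioo hr.1.ne]
  exact right_mem_Icc.mpr hr.1.le

theorem growth_le_of_touch {d : ℕ} (hf : RadialRegular f R T) {p ε K C a c g : ℝ}
    (hp : p ∈ Ioo 0 R) (ht : t ∈ Ioo 0 T) (hε : 0 < ε)
    (hzero : p ^ d * f p t + ε * Real.exp (K * t) = 0)
    (hr : ∀ ρ ∈ Ioo 0 R, 0 ≤ ρ ^ d * f ρ t + ε * Real.exp (K * t))
    (hl : ∀ s ∈ Ioo 0 t, 0 ≤ p ^ d * f p s + ε * Real.exp (K * s))
    (hsuper : radialLaplacian d f p t + a * massDensity d f p t + c * g ≤ pderivT f p t)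
    (hc : 0 ≤ c) (hcC : c ≤ C) (hg : 0 ≤ p ^ d * g + ε * Real.exp (K * t)) : K ≤ C := by
  set E := ε * Real.exp (K * t)
  have hE : 0 < E := by positivity
  have hmin_r : IsLocalMin (fun ρ => ρ ^ d * f ρ t) p := by
    filter_upwards [Ioo_mem_nhds hp.1 hp.2] with ρ hρ
    linarith [hr ρ hρ]
  have hdensity : massDensity d f p t = 0 :=
    hmin_r.mul_deriv_add_eq_zero_of_pow_mul hp.1 (hf.differentiableAt_radial p hp t ht)
  have hlap : 0 ≤ radialLaplacian d f p t :=
    hmin_r.radialLaplacian_nonneg_of_pow_mul hp.1 (hf.eventually_differentiableAt_radial hp ht)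
      (hf.differentiableAt_pderivR p hp t ht)
  have hmin_t : IsLocalMinOn (fun s => p ^ d * f p s + ε * Real.exp (K * s)) (Iic t) t := by
    filter_upwards [Ioc_mem_nhdsLE ht.1] with s hs
    rcases hs.2.lt_or_eq with hlt | rfl
    · exact hzero ▸ hl s ⟨hs.1, hlt⟩
    · exact le_rfl
  have htime : p ^ d * pderivT f p t + K * E ≤ 0 :=
    hmin_t.hasDerivAt_nonpos_of_Iic <|
      (((hf.differentiableAt_time p hp t ht).hasDerivAt.const_mul _).add
        (((hasDerivAt_id t).const_mul K).exp.const_mul ε)).congr_deriv (by simp [E, pderivT]; ring)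
  have hcoupling : c * g ≤ pderivT f p t := by
    rw [hdensity, mul_zero, add_zero] at hsuper
    linarith
  have h₁ : c * (p ^ d * g) ≤ p ^ d * pderivT f p t := by
    rw [mul_left_comm]
    exact mul_le_mul_of_nonneg_left hcoupling (pow_nonneg hp.1.le d)
  have h₂ : c * -E ≤ c * (p ^ d * g) := mul_le_mul_of_nonneg_left (by linarith) hc
  have h₃ : c * E ≤ C * E := mul_le_mul_of_nonneg_right hcC hE.le
  exact le_of_mul_le_mul_right (by linarith) hE

end RadialRegular

section System

variable {R T : ℝ} {d : ℕ} {U V a b c e : ℝ → ℝ → ℝ}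

theorem RadialRegular.perturbed_pos (hd : d ≠ 0) (hU : RadialRegular U R T)
    (hV : RadialRegular V R T)
    (hsupU : ∀ r ∈ Ioo 0 R, ∀ t ∈ Ioo 0 T,
      radialLaplacian d U r t + a r t * massDensity d U r t + c r t * V r t ≤ pderivT U r t)
    (hsupV : ∀ r ∈ Ioo 0 R, ∀ t ∈ Ioo 0 T,
      radialLaplacian d V r t + b r t * massDensity d V r t + e r t * U r t ≤ pderivT V r t)
    (hce : ∀ r ∈ Ioo 0 R, ∀ t ∈ Ioo 0 T, 0 ≤ c r t ∧ 0 ≤ e r t)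
    {T₀ C : ℝ} (hT₀ : T₀ < T) (hC : ∀ r ∈ Ioo 0 R, ∀ t ∈ Ioc 0 T₀, c r t ≤ C ∧ e r t ≤ C)
    (hinit : ∀ r ∈ Ioc 0 R, 0 ≤ U r 0 ∧ 0 ≤ V r 0)
    (hbdry : ∀ t ∈ Ioo 0 T, 0 ≤ U R t ∧ 0 ≤ V R t) {ε : ℝ} (hε : 0 < ε) :
    ∀ r ∈ Icc 0 R, ∀ t ∈ Icc 0 T₀, 0 < min (r ^ d * U r t + ε * Real.exp ((C + 1) * t))
      (r ^ d * V r t + ε * Real.exp ((C + 1) * t)) := by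
  set K := C + 1
  let φ (f : ℝ → ℝ → ℝ) (q : ℝ × ℝ) : ℝ := q.1 ^ d * f q.1 q.2 + ε * Real.exp (K * q.2)
  have hφ_pos (f : ℝ → ℝ → ℝ) (r t : ℝ) (hr : 0 ≤ r) (hf : 0 ≤ f r t) : 0 < φ f (r, t) :=
    add_pos_of_nonneg_of_pos (mul_nonneg (pow_nonneg hr d) hf) (by positivity)
  have hφ_zero (f : ℝ → ℝ → ℝ) (t : ℝ) : 0 < φ f (0, t) := by
    simp only [φ, zero_pow hd, zero_mul, zero_add]
    positivity
  have hφ_cont (f : ℝ → ℝ → ℝ) (hf : RadialRegular f R T) :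
      ContinuousOn (φ f) (Icc 0 R ×ˢ Icc 0 T₀) :=
    ((continuous_fst.pow d).continuousOn.mul
      (hf.continuousOn.mono (prod_mono le_rfl (Icc_subset_Ico_right hT₀)))).add
      (by fun_prop : Continuous fun q : ℝ × ℝ => ε * Real.exp (K * q.2)).continuousOn
  by_contra! hneg
  obtain ⟨r, hr, t, ht, hrt⟩ := hneg
  obtain ⟨p, hp, ts, ⟨hts_pos, htsT₀⟩, hzero, hat, hleft⟩ :=
    exists_interior_first_zero ((hφ_cont U hU).inf (hφ_cont V hV))
      (fun r hr => by
        rcases hr.1.eq_or_lt with rfl | hr0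
        · exact lt_min (hφ_zero U 0) (hφ_zero V 0)
        · exact lt_min (hφ_pos U r 0 hr0.le (hinit r ⟨hr0, hr.2⟩).1)
            (hφ_pos V r 0 hr0.le (hinit r ⟨hr0, hr.2⟩).2))
      (fun t ht => ⟨lt_min (hφ_zero U t) (hφ_zero V t),
        lt_min (hφ_pos U R t (hr.1.trans hr.2) (hbdry t ⟨ht.1, ht.2.trans_lt hT₀⟩).1)
          (hφ_pos V R t (hr.1.trans hr.2) (hbdry t ⟨ht.1, ht.2.trans_lt hT₀⟩).2)⟩)
      ⟨(r, t), ⟨hr, ht⟩, hrt⟩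
  have hts : ts ∈ Ioo 0 T := ⟨hts_pos, htsT₀.trans_lt hT₀⟩
  have hKC : K ≤ C := by
    rcases min_choice (φ U (p, ts)) (φ V (p, ts)) with h | h <;> rw [h] at hzero
    · exact hU.growth_le_of_touch hp hts hε hzero
        (fun ρ hρ => (le_min_iff.mp (hat ρ (Ioo_subset_Icc_self hρ))).1)
        (fun s hs => (lt_min_iff.mp (hleft s (Ioo_subset_Ico_self hs))).1.le)
        (hsupU p hp ts hts) (hce p hp ts hts).1 (hC p hp ts ⟨hts_pos, htsT₀⟩).1
        (le_min_iff.mp (hat p (Ioo_subset_Icc_self hp))).2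
    · exact hV.growth_le_of_touch hp hts hε hzero
        (fun ρ hρ => (le_min_iff.mp (hat ρ (Ioo_subset_Icc_self hρ))).2)
        (fun s hs => (lt_min_iff.mp (hleft s (Ioo_subset_Ico_self hs))).2.le)
        (hsupV p hp ts hts) (hce p hp ts hts).2 (hC p hp ts ⟨hts_pos, htsT₀⟩).2
        (le_min_iff.mp (hat p (Ioo_subset_Icc_self hp))).1
  linarith

theorem RadialRegular.nonneg_of_supersolution_system (hd : d ≠ 0) (hU : RadialRegular U R T)
    (hV : RadialRegular V R T)
    (hsupU : ∀ r ∈ Ioo 0 R, ∀ t ∈ Ioo 0 T,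
      radialLaplacian d U r t + a r t * massDensity d U r t + c r t * V r t ≤ pderivT U r t)
    (hsupV : ∀ r ∈ Ioo 0 R, ∀ t ∈ Ioo 0 T,
      radialLaplacian d V r t + b r t * massDensity d V r t + e r t * U r t ≤ pderivT V r t)
    (hce : ∀ r ∈ Ioo 0 R, ∀ t ∈ Ioo 0 T, 0 ≤ c r t ∧ 0 ≤ e r t)
    (hcC : ∀ T₀ < T, ∃ C, ∀ r ∈ Ioo 0 R, ∀ t ∈ Ioo 0 T₀, c r t ≤ C)
    (heC : ∀ T₀ < T, ∃ C, ∀ r ∈ Ioo 0 R, ∀ t ∈ Ioo 0 T₀, e r t ≤ C)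
    (hinit : ∀ r ∈ Ioo 0 R, 0 ≤ U r 0 ∧ 0 ≤ V r 0)
    (hbdry : ∀ t ∈ Ioo 0 T, 0 ≤ U R t ∧ 0 ≤ V R t) :
    ∀ r ∈ Ioo 0 R, ∀ t ∈ Ico 0 T, 0 ≤ U r t ∧ 0 ≤ V r t := by
  intro r hr t ht
  obtain ⟨T₁, htT₁, hT₁T⟩ := exists_between ht.2
  obtain ⟨C₁, hC₁⟩ := hcC T₁ hT₁T
  obtain ⟨C₂, hC₂⟩ := heC T₁ hT₁T
  set C := max C₁ C₂
  have hT : 0 < T := ht.1.trans_lt ht.2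
  have hinit' (r : ℝ) (hr : r ∈ Ioc 0 R) : 0 ≤ U r 0 ∧ 0 ≤ V r 0 :=
    ⟨hU.nonneg_initial_of_Ioo hT (fun r hr => (hinit r hr).1) r hr,
      hV.nonneg_initial_of_Ioo hT (fun r hr => (hinit r hr).2) r hr⟩
  have hpos (ε : ℝ) (hε : 0 < ε) := lt_min_iff.mp <|
    hU.perturbed_pos hd hV hsupU hsupV hce ht.2
      (fun r hr s hs => ⟨(hC₁ r hr s ⟨hs.1, hs.2.trans_lt htT₁⟩).trans (le_max_left _ _),
        (hC₂ r hr s ⟨hs.1, hs.2.trans_lt htT₁⟩).trans (le_max_right _ _)⟩) hinit' hbdry hε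
      r (Ioo_subset_Icc_self hr) t ⟨ht.1, le_rfl⟩
  have hexp := Real.exp_pos ((C + 1) * t)
  exact ⟨nonneg_of_mul_nonneg_right
      (nonneg_of_forall_pos_lt_add_mul hexp fun ε hε => (hpos ε hε).1) (pow_pos hr.1 d),
    nonneg_of_mul_nonneg_right
      (nonneg_of_forall_pos_lt_add_mul hexp fun ε hε => (hpos ε hε).2) (pow_pos hr.1 d)⟩

end System

section MassSystem

variable {d : ℕ} {R T : ℝ} {Ml Mu Wl Wu : ℝ → ℝ → ℝ}

theorem MassRegI.exists_massDensity_le {M : ℝ → ℝ → ℝ} (hM : MassRegI M R T)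
    (hbd : ∀ T₀ < T, ∃ Cb : ℝ, ∀ r ∈ Ioo 0 R, ∀ t ∈ Ioo 0 T₀, |r * pderivR M r t| ≤ Cb) :
    ∀ T₀ < T, ∃ C, ∀ r ∈ Ioo 0 R, ∀ t ∈ Ioo 0 T₀, massDensity d M r t ≤ C := by
  intro T₀ hT₀
  obtain ⟨C₁, h₁⟩ := hbd T₀ hT₀
  obtain ⟨C₂, h₂⟩ := hM.2.2.2.2.2.2.2 T₀ hT₀
  refine ⟨C₁ + d * C₂, fun r hr t ht => ?_⟩
  have hradial := (le_abs_self _).trans (h₁ r hr t ht)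
  have hmass := mul_le_mul_of_nonneg_left
    ((le_abs_self _).trans (h₂ r (Ioo_subset_Icc_self hr) t (Ioo_subset_Icc_self ht)))
    (Nat.cast_nonneg d : (0 : ℝ) ≤ d)
  exact add_le_add hradial hmass

-- With `F = massDensity d`: `F M̄ · W̄ - F M̲ · W̲ = F (M̄ - M̲) · Wc + F Mc · (W̄ - W̲)`.
theorem supersolution_sub_M (hMl : RadialRegular Ml R T) (hMu : RadialRegular Mu R T)
    {Mc Wc : ℝ → ℝ → ℝ} (hcarrier : Mc = Ml ∧ Wc = Wu ∨ Mc = Mu ∧ Wc = Wl)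
    (hineq : ∀ r ∈ Ioo 0 R, ∀ t ∈ Ioo 0 T,
      pderivT Ml r t - pderivRR Ml r t - ((d : ℝ) + 1) / r * pderivR Ml r t
          - r * pderivR Ml r t * Wl r t - (d : ℝ) * Ml r t * Wl r t
        ≤ pderivT Mu r t - pderivRR Mu r t - ((d : ℝ) + 1) / r * pderivR Mu r t
          - r * pderivR Mu r t * Wu r t - (d : ℝ) * Mu r t * Wu r t) :
    ∀ r ∈ Ioo 0 R, ∀ t ∈ Ioo 0 T,
      radialLaplacian d (fun r t => Mu r t - Ml r t) r t
          + Wc r t * massDensity d (fun r t => Mu r t - Ml r t) r t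
          + massDensity d Mc r t * (Wu r t - Wl r t)
        ≤ pderivT (fun r t => Mu r t - Ml r t) r t := by
  intro r hr t ht
  rw [hMu.radialLaplacian_sub d hMl hr ht, hMu.massDensity_sub d hMl hr ht,
    hMu.pderivT_sub hMl hr ht]
  have := hineq r hr t ht
  simp only [radialLaplacian, massDensity]
  rcases hcarrier with ⟨rfl, rfl⟩ | ⟨rfl, rfl⟩ <;> linarith

theorem supersolution_sub_W (hWl : RadialRegular Wl R T) (hWu : RadialRegular Wu R T)
    (hineq : ∀ r ∈ Ioo 0 R, ∀ t ∈ Ioo 0 T,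
      pderivT Wl r t - pderivRR Wl r t - ((d : ℝ) + 1) / r * pderivR Wl r t - Ml r t
        ≤ pderivT Wu r t - pderivRR Wu r t - ((d : ℝ) + 1) / r * pderivR Wu r t - Mu r t) :
    ∀ r ∈ Ioo 0 R, ∀ t ∈ Ioo 0 T,
      radialLaplacian d (fun r t => Wu r t - Wl r t) r t + (Mu r t - Ml r t)
        ≤ pderivT (fun r t => Wu r t - Wl r t) r t := by
  intro r hr t ht
  rw [hWu.radialLaplacian_sub d hWl hr ht, hWu.pderivT_sub hWl hr ht]
  simp only [radialLaplacian]
  linarith [hineq r hr t ht]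

end MassSystem

theorem stmt5_general (d : ℕ) (hd : 1 ≤ d) (T : ℝ) (R : ℝ)
    (Ml Mu Wl Wu : ℝ → ℝ → ℝ)
    (hMl : MassRegI Ml R T) (hMu : MassRegI Mu R T)
    (hWl : MassRegI Wl R T) (hWu : MassRegI Wu R T)
    (hflux :
      ((∀ r ∈ Set.Ioo (0 : ℝ) R, ∀ t ∈ Set.Ioo (0 : ℝ) T,
          0 ≤ r * pderivR Ml r t + (d : ℝ) * Ml r t) ∧
        (∀ T₀ < T, ∃ Cb : ℝ, ∀ r ∈ Set.Ioo (0 : ℝ) R, ∀ t ∈ Set.Ioo (0 : ℝ) T₀,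
          |r * pderivR Ml r t| ≤ Cb)) ∨
      ((∀ r ∈ Set.Ioo (0 : ℝ) R, ∀ t ∈ Set.Ioo (0 : ℝ) T,
          0 ≤ r * pderivR Mu r t + (d : ℝ) * Mu r t) ∧
        (∀ T₀ < T, ∃ Cb : ℝ, ∀ r ∈ Set.Ioo (0 : ℝ) R, ∀ t ∈ Set.Ioo (0 : ℝ) T₀,
          |r * pderivR Mu r t| ≤ Cb)))
    (hineq1 : ∀ r ∈ Set.Ioo (0 : ℝ) R, ∀ t ∈ Set.Ioo (0 : ℝ) T,
      pderivT Ml r t - pderivRR Ml r t - ((d : ℝ) + 1) / r * pderivR Ml r t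
          - r * pderivR Ml r t * Wl r t - (d : ℝ) * Ml r t * Wl r t
        ≤ pderivT Mu r t - pderivRR Mu r t - ((d : ℝ) + 1) / r * pderivR Mu r t
          - r * pderivR Mu r t * Wu r t - (d : ℝ) * Mu r t * Wu r t)
    (hineq2 : ∀ r ∈ Set.Ioo (0 : ℝ) R, ∀ t ∈ Set.Ioo (0 : ℝ) T,
      pderivT Wl r t - pderivRR Wl r t - ((d : ℝ) + 1) / r * pderivR Wl r t - Ml r t
        ≤ pderivT Wu r t - pderivRR Wu r t - ((d : ℝ) + 1) / r * pderivR Wu r t - Mu r t)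
    (hinit : ∀ r ∈ Set.Ioo (0 : ℝ) R, Ml r 0 ≤ Mu r 0 ∧ Wl r 0 ≤ Wu r 0)
    (hbound : ∀ t ∈ Set.Ioo (0 : ℝ) T, Ml R t ≤ Mu R t ∧ Wl R t ≤ Wu R t) :
    ∀ r ∈ Set.Ioo (0 : ℝ) R, ∀ t ∈ Set.Ico (0 : ℝ) T,
      Ml r t ≤ Mu r t ∧ Wl r t ≤ Wu r t := by
  obtain ⟨Mc, Wc, hcarrier, hMc, hpos, hbd⟩ : ∃ Mc Wc : ℝ → ℝ → ℝ,
      (Mc = Ml ∧ Wc = Wu ∨ Mc = Mu ∧ Wc = Wl) ∧ MassRegI Mc R T ∧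
      (∀ r ∈ Ioo 0 R, ∀ t ∈ Ioo 0 T, 0 ≤ massDensity d Mc r t) ∧
      ∀ T₀ < T, ∃ Cb : ℝ, ∀ r ∈ Ioo 0 R, ∀ t ∈ Ioo 0 T₀, |r * pderivR Mc r t| ≤ Cb := by
    rcases hflux with ⟨hpos, hbd⟩ | ⟨hpos, hbd⟩
    exacts [⟨Ml, Wu, .inl ⟨rfl, rfl⟩, hMl, hpos, hbd⟩, ⟨Mu, Wl, .inr ⟨rfl, rfl⟩, hMu, hpos, hbd⟩]
  have hW := supersolution_sub_W hWl.radialRegular hWu.radialRegular hineq2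
  have key := (hMu.radialRegular.sub hMl.radialRegular).nonneg_of_supersolution_system
    (b := 0) (e := 1) (Nat.one_le_iff_ne_zero.mp hd) (hWu.radialRegular.sub hWl.radialRegular)
    (supersolution_sub_M hMl.radialRegular hMu.radialRegular hcarrier hineq1)
    (fun r hr t ht => by simpa using hW r hr t ht) (fun r hr t ht => ⟨hpos r hr t ht, zero_le_one⟩)
    (hMc.exists_massDensity_le hbd) (fun _ _ => ⟨1, fun _ _ _ _ => le_rfl⟩)
    (fun r hr => ⟨sub_nonneg.2 (hinit r hr).1, sub_nonneg.2 (hinit r hr).2⟩)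
    (fun t ht => ⟨sub_nonneg.2 (hbound t ht).1, sub_nonneg.2 (hbound t ht).2⟩)
  intro r hr t ht
  exact ⟨sub_nonneg.1 (key r hr t ht).1, sub_nonneg.1 (key r hr t ht).2⟩

/-- Comparison principle for the mass-function system on a
bounded interval `(0,R)`, with a boundary condition at `r = R`. -/
theorem stmt5 (d : ℕ) (hd : 1 ≤ d) (T : ℝ) (hT : 0 < T) (R : ℝ) (hR : 0 < R)
    (Ml Mu Wl Wu : ℝ → ℝ → ℝ)
    (hMl : MassRegI Ml R T) (hMu : MassRegI Mu R T)
    (hWl : MassRegI Wl R T) (hWu : MassRegI Wu R T)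
    (hflux :
      ((∀ r ∈ Set.Ioo (0 : ℝ) R, ∀ t ∈ Set.Ioo (0 : ℝ) T,
          0 ≤ r * pderivR Ml r t + (d : ℝ) * Ml r t) ∧
        (∀ T₀ < T, ∃ Cb : ℝ, ∀ r ∈ Set.Ioo (0 : ℝ) R, ∀ t ∈ Set.Ioo (0 : ℝ) T₀,
          |r * pderivR Ml r t| ≤ Cb)) ∨
      ((∀ r ∈ Set.Ioo (0 : ℝ) R, ∀ t ∈ Set.Ioo (0 : ℝ) T,
          0 ≤ r * pderivR Mu r t + (d : ℝ) * Mu r t) ∧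
        (∀ T₀ < T, ∃ Cb : ℝ, ∀ r ∈ Set.Ioo (0 : ℝ) R, ∀ t ∈ Set.Ioo (0 : ℝ) T₀,
          |r * pderivR Mu r t| ≤ Cb)))
    (hineq1 : ∀ r ∈ Set.Ioo (0 : ℝ) R, ∀ t ∈ Set.Ioo (0 : ℝ) T,
      pderivT Ml r t - pderivRR Ml r t - ((d : ℝ) + 1) / r * pderivR Ml r t
          - r * pderivR Ml r t * Wl r t - (d : ℝ) * Ml r t * Wl r t
        ≤ pderivT Mu r t - pderivRR Mu r t - ((d : ℝ) + 1) / r * pderivR Mu r t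
          - r * pderivR Mu r t * Wu r t - (d : ℝ) * Mu r t * Wu r t)
    (hineq2 : ∀ r ∈ Set.Ioo (0 : ℝ) R, ∀ t ∈ Set.Ioo (0 : ℝ) T,
      pderivT Wl r t - pderivRR Wl r t - ((d : ℝ) + 1) / r * pderivR Wl r t - Ml r t
        ≤ pderivT Wu r t - pderivRR Wu r t - ((d : ℝ) + 1) / r * pderivR Wu r t - Mu r t)
    (hinit : ∀ r ∈ Set.Ioo (0 : ℝ) R, Ml r 0 ≤ Mu r 0 ∧ Wl r 0 ≤ Wu r 0)
    (hbound : ∀ t ∈ Set.Ioo (0 : ℝ) T, Ml R t ≤ Mu R t ∧ Wl R t ≤ Wu R t) :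
    ∀ r ∈ Set.Ioo (0 : ℝ) R, ∀ t ∈ Set.Ico (0 : ℝ) T,
      Ml r t ≤ Mu r t ∧ Wl r t ≤ Wu r t :=
  stmt5_general d hd T R Ml Mu Wl Wu hMl hMu hWl hWu hflux hineq1 hineq2 hinit hbound
end

section
/- (Preservation of radial monotonicity.) Let d ≥ 5 be an integer and T > 0. Let u, w : [0,∞)×[0,T) → ℝ be nonnegative and bounded on [0,∞)×[0,T₀] for every T₀ < T, continuously differentiable in r, and set ũ := ∂_r u, w̃ := ∂_r w. Assume ũ and w̃ are continuous on [0,∞)×[0,T), bounded on [0,∞)×[0,T₀] for every T₀ < T, possess continuous partial derivatives ∂_t, ∂_r, ∂_{rr} on (0,∞)×(0,T), and satisfy ũ(0,t) = w̃(0,t) = 0 for all t ∈ [0,T). Define v_r(r,t) := −r^{1−d}∫_0^r ρ^{d−1} w(ρ,t) dρ, and let v_{rr} := ∂_r v_r and v_{rrr} := ∂_{rr} v_r. Assume that on (0,∞)×(0,T): ∂_t ũ = ∂_{rr} ũ + ((d−1)/r − v_r)·∂_r ũ + (−(d−1)/r² − 2v_{rr} − ((d−1)/r)v_r)·ũ −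 (v_{rrr} + ((d−1)/r)v_{rr} − ((d−1)/r²)v_r)·u, and ∂_t w̃ = ∂_{rr} w̃ + ((d−1)/r)∂_r w̃ − ((d−1)/r²)·w̃ + ũ. If ũ(r,0) ≤ 0 and w̃(r,0) ≤ 0 for all r ≥ 0, then ũ(r,t) ≤ 0 and w̃(r,t) ≤ 0 for all (r,t) ∈ [0,∞)×[0,T). -/
/-- `f` has continuous partial derivatives `∂_t, ∂_r, ∂_{rr}` on `(0,∞) × (0,T)`. -/
def SmoothC21 (f : ℝ → ℝ → ℝ) (T : ℝ) : Prop :=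
  (∀ r ∈ Set.Ioi (0 : ℝ), ∀ t ∈ Set.Ioo (0 : ℝ) T, DifferentiableAt ℝ (fun s => f r s) t) ∧
  (∀ r ∈ Set.Ioi (0 : ℝ), ∀ t ∈ Set.Ioo (0 : ℝ) T, DifferentiableAt ℝ (fun ρ => f ρ t) r) ∧
  (∀ r ∈ Set.Ioi (0 : ℝ), ∀ t ∈ Set.Ioo (0 : ℝ) T,
    DifferentiableAt ℝ (fun ρ => pderivR f ρ t) r) ∧
  ContinuousOn (fun p : ℝ × ℝ => pderivT f p.1 p.2) (Set.Ioi 0 ×ˢ Set.Ioo 0 T) ∧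
  ContinuousOn (fun p : ℝ × ℝ => pderivR f p.1 p.2) (Set.Ioi 0 ×ˢ Set.Ioo 0 T) ∧
  ContinuousOn (fun p : ℝ × ℝ => pderivRR f p.1 p.2) (Set.Ioi 0 ×ˢ Set.Ioo 0 T)

/-- The radial derivative of the chemical potential, recovered from `w` by
`v_r(r,t) = −r^{1−d} ∫_0^r ρ^{d−1} w(ρ,t) dρ`. -/
noncomputable def vrad (d : ℕ) (w : ℝ → ℝ → ℝ) (r t : ℝ) : ℝ :=
  -(r ^ ((1 : ℤ) - (d : ℤ))) * ∫ ρ in (0 : ℝ)..r, ρ ^ (d - 1) * w ρ t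

/-!
Fix `T₀ < T`, let `C` bound `u` and `w` on `[0,∞) × [0,T₀]`, put `κ = 2d + 5C + 1` and, for
`ε > 0`, `F = max(ũ, w̃) e^{-κt} - ε(1 + r²)`. Then `F ≤ 0` for large `r` (where `ũ, w̃` are
bounded), at `r = 0` and at `t = 0`, so if `F` were positive somewhere it would attain a positive
maximum at some `(r₀, t₀)` with `r₀, t₀ > 0`. With `E = ε e^{κt₀}`, the component `f` realising
the maximum satisfies `∂_r f = 2E r₀`, `∂_rr f ≤ 2E` and `∂_t f ≥ κ f` there. Its equation
contradicts this: for `w̃` directly, for `ũ` after using `v_r ≤ 0`, `-v_r ≤ C r` and the identity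
`v_rrr + (d-1)/r v_rr - (d-1)/r² v_r = -w̃`, which turn the zeroth-order terms into ones of size
at most `(2d + 5C) f`. Hence `F ≤ 0`, and letting `ε → 0` gives `ũ, w̃ ≤ 0`.
-/

open Filter Set Topology Real

theorem IsLocalMax.deriv_deriv_nonpos {f : ℝ → ℝ} {x : ℝ} (h : IsLocalMax f x)
    (hc : ContinuousAt f x) : deriv (deriv f) x ≤ 0 := by
  by_contra! hpos
  have hmin : IsLocalMin f x := isLocalMin_of_deriv_deriv_pos hpos h.deriv_eq_zero hc
  have hconst : f =ᶠ[𝓝 x] fun _ => f x := by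
    filter_upwards [h, hmin] with y hy hy' using le_antisymm hy hy'
  rw [hconst.deriv.deriv_eq] at hpos
  simp at hpos

theorem IsLocalMax.deriv_eq_of_sub {f g : ℝ → ℝ} {x : ℝ} (h : IsLocalMax (f - g) x)
    (hf : DifferentiableAt ℝ f x) (hg : DifferentiableAt ℝ g x) : deriv f x = deriv g x := by
  have := h.deriv_eq_zero
  rw [deriv_sub hf hg] at this
  linarith

theorem IsLocalMax.deriv_deriv_le_of_sub {f g : ℝ → ℝ} {x : ℝ} (h : IsLocalMax (f - g) x)
    (hf : ∀ᶠ y in 𝓝 x, DifferentiableAt ℝ f y) (hg : ∀ᶠ y in 𝓝 x, DifferentiableAt ℝ g y)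
    (hf' : DifferentiableAt ℝ (deriv f) x) (hg' : DifferentiableAt ℝ (deriv g) x) :
    deriv (deriv f) x ≤ deriv (deriv g) x := by
  have hderiv : deriv (f - g) =ᶠ[𝓝 x] deriv f - deriv g := by
    filter_upwards [hf, hg] with y hfy hgy using deriv_sub hfy hgy
  have := h.deriv_deriv_nonpos (hf.self_of_nhds.sub hg.self_of_nhds).continuousAt
  rw [hderiv.deriv_eq, deriv_sub hf' hg'] at this
  linarith

theorem IsLocalMaxOn.hasDerivAt_nonneg_of_Iic {f : ℝ → ℝ} {x f' : ℝ}
    (h : IsLocalMaxOn f (Iic x) x) (hf : HasDerivAt f f' x) : 0 ≤ f' := by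
  have hcone : (-1 : ℝ) ∈ posTangentConeAt (Iic x) x :=
    mem_posTangentConeAt_of_segment_subset (by
      rw [segment_symm, segment_eq_Icc (by linarith)]
      exact Icc_subset_Iic_self)
  simpa using h.hasFDerivWithinAt_nonpos hf.hasFDerivAt.hasFDerivWithinAt hcone

section ChemicalPotential

variable {d : ℕ} {w : ℝ → ℝ → ℝ} {r t : ℝ}

theorem hasDerivAt_vrad (hd : 1 ≤ d) (hw : ContinuousOn (fun ρ => w ρ t) (Ici 0)) (hr : 0 < r) :
    HasDerivAt (fun ρ => vrad d w ρ t) (-w r t - ((d : ℝ) - 1) / r * vrad d w r t) r := by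
  have hcont : ContinuousOn (fun ρ => ρ ^ (d - 1) * w ρ t) (Ici 0) := (continuousOn_pow _).mul hw
  have hI : HasDerivAt (fun x => ∫ ρ in (0 : ℝ)..x, ρ ^ (d - 1) * w ρ t) (r ^ (d - 1) * w r t) r :=
    intervalIntegral.integral_hasDerivAt_right
      ((hcont.mono (by simp [uIcc_of_le hr.le, Icc_subset_Ici_self])).intervalIntegrable)
      ((hcont.mono Ioi_subset_Ici_self).stronglyMeasurableAtFilter isOpen_Ioi r hr)
      (hcont.continuousAt (Ici_mem_nhds hr))
  have hpow : r ^ ((1 : ℤ) - d) * r ^ (d - 1) = 1 := by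
    rw [← zpow_natCast, ← zpow_add₀ hr.ne', Nat.cast_sub hd]
    simp
  have hpow' : r ^ ((1 : ℤ) - d - 1) = r ^ ((1 : ℤ) - d) / r := by
    rw [zpow_sub₀ hr.ne', zpow_one]
  have hv : HasDerivAt (fun ρ => vrad d w ρ t)
      (-(((1 : ℤ) - d : ℤ) * r ^ ((1 : ℤ) - d - 1)) * (∫ ρ in (0 : ℝ)..r, ρ ^ (d - 1) * w ρ t)
        + -r ^ ((1 : ℤ) - d) * (r ^ (d - 1) * w r t)) r :=
    (hasDerivAt_zpow ((1 : ℤ) - d) r (Or.inl hr.ne')).neg.mul hI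
  refine hv.congr_deriv ?_
  rw [hpow', neg_mul (r ^ ((1 : ℤ) - d)), ← mul_assoc, hpow, vrad]
  push_cast
  field_simp
  ring

theorem pderivR_vrad (hd : 1 ≤ d) (hw : ContinuousOn (fun ρ => w ρ t) (Ici 0)) (hr : 0 < r) :
    pderivR (vrad d w) r t = -w r t - ((d : ℝ) - 1) / r * vrad d w r t :=
  (hasDerivAt_vrad hd hw hr).deriv

theorem pderivRR_vrad_add (hd : 1 ≤ d) (hw : ContinuousOn (fun ρ => w ρ t) (Ici 0))
    (hw' : DifferentiableAt ℝ (fun ρ => w ρ t) r) (hr : 0 < r) :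
    pderivRR (vrad d w) r t + ((d : ℝ) - 1) / r * pderivR (vrad d w) r t
      - ((d : ℝ) - 1) / r ^ 2 * vrad d w r t = -pderivR w r t := by
  have hev : (fun ρ => pderivR (vrad d w) ρ t)
      =ᶠ[𝓝 r] fun ρ => -w ρ t - ((d : ℝ) - 1) / ρ * vrad d w ρ t := by
    filter_upwards [Ioi_mem_nhds hr] with ρ hρ using pderivR_vrad hd hw hρ
  have hcoef : HasDerivAt (fun ρ : ℝ => ((d : ℝ) - 1) / ρ) (-(((d : ℝ) - 1) / r ^ 2)) r := by
    simpa [div_eq_mul_inv] using (hasDerivAt_inv hr.ne').const_mul ((d : ℝ) - 1)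
  have hv := hasDerivAt_vrad hd hw hr
  have hrhs : HasDerivAt (fun ρ => -w ρ t - ((d : ℝ) - 1) / ρ * vrad d w ρ t)
      (-pderivR w r t - (-(((d : ℝ) - 1) / r ^ 2) * vrad d w r t
        + ((d : ℝ) - 1) / r * (-w r t - ((d : ℝ) - 1) / r * vrad d w r t))) r :=
    hw'.hasDerivAt.neg.sub (hcoef.mul hv)
  rw [pderivRR, hev.deriv_eq, hrhs.deriv, pderivR_vrad hd hw hr]
  ring

theorem vrad_nonpos (hr : 0 ≤ r) (hw : ∀ ρ ∈ Icc 0 r, 0 ≤ w ρ t) : vrad d w r t ≤ 0 := by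
  have hI : 0 ≤ ∫ ρ in (0 : ℝ)..r, ρ ^ (d - 1) * w ρ t :=
    intervalIntegral.integral_nonneg hr fun ρ hρ => mul_nonneg (pow_nonneg hρ.1 _) (hw ρ hρ)
  rw [vrad, neg_mul]
  exact neg_nonpos.mpr (mul_nonneg (zpow_nonneg hr _) hI)

theorem neg_vrad_le {C : ℝ} (hd : 1 ≤ d) (hr : 0 < r) (hw : ContinuousOn (fun ρ => w ρ t) (Ici 0))
    (hC : ∀ ρ ∈ Icc 0 r, w ρ t ≤ C) : -vrad d w r t ≤ C * r / d := by
  have hint : ∫ ρ in (0 : ℝ)..r, C * ρ ^ (d - 1) = C * r ^ d / d := by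
    rw [intervalIntegral.integral_const_mul, integral_pow, Nat.sub_add_cancel hd,
      Nat.cast_sub hd]
    simp [zero_pow (by omega : d ≠ 0)]
    ring
  have hI : ∫ ρ in (0 : ℝ)..r, ρ ^ (d - 1) * w ρ t ≤ C * r ^ d / d := by
    rw [← hint]
    refine intervalIntegral.integral_mono_on hr.le ?_
      ((continuous_const.mul (continuous_pow _)).intervalIntegrable _ _) fun ρ hρ => ?_
    · exact (((continuousOn_pow _).mul hw).mono
        (by simp [uIcc_of_le hr.le, Icc_subset_Ici_self])).intervalIntegrable
    · rw [mul_comm]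
      exact mul_le_mul_of_nonneg_right (hC ρ hρ) (pow_nonneg hρ.1 _)
  have hpow : r ^ ((1 : ℤ) - d) * r ^ d = r := by
    rw [← zpow_natCast, ← zpow_add₀ hr.ne']
    simp
  calc -vrad d w r t = r ^ ((1 : ℤ) - d) * ∫ ρ in (0 : ℝ)..r, ρ ^ (d - 1) * w ρ t := by
        rw [vrad, neg_mul, neg_neg]
    _ ≤ r ^ ((1 : ℤ) - d) * (C * r ^ d / d) := mul_le_mul_of_nonneg_left hI (zpow_nonneg hr.le _)
    _ = C * (r ^ ((1 : ℤ) - d) * r ^ d) / d := by ring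
    _ = C * r / d := by rw [hpow]

end ChemicalPotential

theorem pderiv_conditions_of_weighted_max {f : ℝ → ℝ → ℝ} {T T₀ κ ε r₀ t₀ : ℝ} (hf : SmoothC21 f T)
    (hT₀ : T₀ < T) (hr₀ : 0 < r₀) (ht₀ : t₀ ∈ Ioc 0 T₀)
    (hmax : ∀ r ≥ 0, ∀ t ∈ Icc 0 T₀,
      f r t * exp (-(κ * t)) - ε * (1 + r ^ 2) ≤ f r₀ t₀ * exp (-(κ * t₀)) - ε * (1 + r₀ ^ 2)) :
    pderivR f r₀ t₀ = 2 * (ε * exp (κ * t₀)) * r₀ ∧ pderivRR f r₀ t₀ ≤ 2 * (ε * exp (κ * t₀)) ∧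
      κ * f r₀ t₀ ≤ pderivT f r₀ t₀ := by
  set E := ε * exp (κ * t₀) with hE
  have htT : t₀ ∈ Ioo 0 T := ⟨ht₀.1, ht₀.2.trans_lt hT₀⟩
  have hquad : ∀ ρ, HasDerivAt (fun x => E * (1 + x ^ 2)) (2 * E * ρ) ρ := fun ρ => by
    simpa [mul_comm, mul_assoc, mul_left_comm] using ((hasDerivAt_pow 2 ρ).const_add 1).const_mul E
  have hquad' : deriv (fun x => E * (1 + x ^ 2)) = fun ρ => 2 * E * ρ :=
    funext fun ρ => (hquad ρ).deriv
  have hspace : IsLocalMax ((fun ρ => f ρ t₀) - fun ρ => E * (1 + ρ ^ 2)) r₀ := by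
    filter_upwards [Ioi_mem_nhds hr₀] with ρ hρ
    have hexp : exp (-(κ * t₀)) * exp (κ * t₀) = 1 := by rw [← exp_add]; simp
    have := mul_le_mul_of_nonneg_right (hmax ρ hρ.le t₀ (Ioc_subset_Icc_self ht₀))
      (exp_pos (κ * t₀)).le
    simp only [Pi.sub_apply, hE]
    linear_combination this + (f r₀ t₀ - f ρ t₀) * hexp
  have hdiff : ∀ᶠ ρ in 𝓝 r₀, DifferentiableAt ℝ (fun x => f x t₀) ρ := by
    filter_upwards [Ioi_mem_nhds hr₀] with ρ hρ using hf.2.1 ρ hρ t₀ htT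
  have htime : IsLocalMaxOn (fun s => f r₀ s * exp (-(κ * s)) - ε * (1 + r₀ ^ 2)) (Iic t₀) t₀ := by
    filter_upwards [Icc_mem_nhdsLE ht₀.1] with s hs
    exact hmax r₀ hr₀.le s ⟨hs.1, hs.2.trans ht₀.2⟩
  have hgt : HasDerivAt (fun s => f r₀ s * exp (-(κ * s)) - ε * (1 + r₀ ^ 2))
      (pderivT f r₀ t₀ * exp (-(κ * t₀)) + f r₀ t₀ * (exp (-(κ * t₀)) * -κ)) t₀ := by
    refine ((hf.1 r₀ hr₀ t₀ htT).hasDerivAt.mul ?_).sub_const _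
    simpa using ((hasDerivAt_id t₀).const_mul κ).neg.exp
  refine ⟨?_, ?_, ?_⟩
  · rw [pderivR, hspace.deriv_eq_of_sub (hf.2.1 r₀ hr₀ t₀ htT) (hquad r₀).differentiableAt,
      (hquad r₀).deriv]
  · have := hspace.deriv_deriv_le_of_sub hdiff
      (Eventually.of_forall fun ρ => (hquad ρ).differentiableAt) (hf.2.2.1 r₀ hr₀ t₀ htT)
      (by rw [hquad']; fun_prop)
    rw [hquad'] at this
    simpa [pderivRR, pderivR] using this
  · have := htime.hasDerivAt_nonneg_of_Iic hgt
    nlinarith [exp_pos (-(κ * t₀))]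

def UTildeEqn (d : ℕ) (u w : ℝ → ℝ → ℝ) (r t : ℝ) : Prop :=
  pderivT (pderivR u) r t
    = pderivRR (pderivR u) r t
      + (((d : ℝ) - 1) / r - vrad d w r t) * pderivR (pderivR u) r t
      + (-(((d : ℝ) - 1) / r ^ 2) - 2 * pderivR (vrad d w) r t
          - ((d : ℝ) - 1) / r * vrad d w r t) * pderivR u r t
      - (pderivRR (vrad d w) r t + ((d : ℝ) - 1) / r * pderivR (vrad d w) r t
          - ((d : ℝ) - 1) / r ^ 2 * vrad d w r t) * u r t

def WTildeEqn (d : ℕ) (u w : ℝ → ℝ → ℝ) (r t : ℝ) : Prop :=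
  pderivT (pderivR w) r t
    = pderivRR (pderivR w) r t + ((d : ℝ) - 1) / r * pderivR (pderivR w) r t
      - ((d : ℝ) - 1) / r ^ 2 * pderivR w r t + pderivR u r t

theorem pderivT_lt_of_uTildeEqn {d : ℕ} (hd : 1 ≤ d) {u w : ℝ → ℝ → ℝ} {C E r t : ℝ}
    (hr : 0 < r) (hu : 0 ≤ u r t ∧ u r t ≤ C) (hw : ∀ ρ ∈ Icc 0 r, 0 ≤ w ρ t ∧ w ρ t ≤ C)
    (hwc : ContinuousOn (fun ρ => w ρ t) (Ici 0)) (hwd : DifferentiableAt ℝ (fun ρ => w ρ t) r)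
    (heqn : UTildeEqn d u w r t) (hE : 0 < E) (hX : E * (1 + r ^ 2) < pderivR u r t)
    (hwu : pderivR w r t ≤ pderivR u r t) (h1 : pderivR (pderivR u) r t = 2 * E * r)
    (h2 : pderivRR (pderivR u) r t ≤ 2 * E) :
    pderivT (pderivR u) r t < (2 * d + 5 * C + 1) * pderivR u r t := by
  have hd1 : (1 : ℝ) ≤ d := by exact_mod_cast hd
  have hC : 0 ≤ C := hu.1.trans hu.2
  have hX0 : 0 < pderivR u r t := (by positivity : 0 < E * (1 + r ^ 2)).trans hX
  have hv : vrad d w r t ≤ 0 := vrad_nonpos hr.le fun ρ hρ => (hw ρ hρ).1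
  have hvC : -vrad d w r t ≤ C * r := (neg_vrad_le hd hr hwc fun ρ hρ => (hw ρ hρ).2).trans
    (div_le_self (by positivity) hd1)
  have hdrift : (((d : ℝ) - 1) / r - vrad d w r t) * (2 * E * r)
      ≤ 2 * ((d : ℝ) - 1) * E + 2 * C * (E * r ^ 2) := by
    have : ((d : ℝ) - 1) / r * (2 * E * r) = 2 * ((d : ℝ) - 1) * E := by field_simp
    nlinarith [mul_le_mul_of_nonneg_right hvC (by positivity : 0 ≤ 2 * E * r)]
  have hcoef : -(((d : ℝ) - 1) / r ^ 2) - 2 * pderivR (vrad d w) r t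
      - ((d : ℝ) - 1) / r * vrad d w r t ≤ 2 * C := by
    rw [pderivR_vrad hd hwc hr]
    have : 0 ≤ ((d : ℝ) - 1) / r ^ 2 := div_nonneg (by linarith) (sq_nonneg r)
    nlinarith [mul_nonpos_of_nonneg_of_nonpos (div_nonneg (by linarith : 0 ≤ (d : ℝ) - 1) hr.le) hv,
      (hw r ⟨hr.le, le_rfl⟩).2]
  have hsource : pderivR w r t * u r t ≤ C * pderivR u r t := by
    nlinarith [mul_le_mul hwu hu.2 hu.1 hX0.le]
  have hE1 : 2 * d * E ≤ 2 * d * pderivR u r t :=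
    mul_le_mul_of_nonneg_left (by nlinarith) (by positivity)
  have hE2 : C * (E * r ^ 2) ≤ C * pderivR u r t := mul_le_mul_of_nonneg_left (by nlinarith) hC
  rw [UTildeEqn, pderivRR_vrad_add hd hwc hwd hr, h1] at heqn
  rw [heqn]
  nlinarith [mul_le_mul_of_nonneg_right hcoef hX0.le]

theorem pderivT_lt_of_wTildeEqn {d : ℕ} (hd : 1 ≤ d) {u w : ℝ → ℝ → ℝ} {E r t : ℝ} (hr : 0 < r)
    (heqn : WTildeEqn d u w r t) (hE : 0 < E) (hX : E * (1 + r ^ 2) < pderivR w r t)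
    (huw : pderivR u r t ≤ pderivR w r t) (h1 : pderivR (pderivR w) r t = 2 * E * r)
    (h2 : pderivRR (pderivR w) r t ≤ 2 * E) :
    pderivT (pderivR w) r t < (2 * d + 1) * pderivR w r t := by
  have hd1 : (1 : ℝ) ≤ d := by exact_mod_cast hd
  have hX0 : 0 < pderivR w r t := (by positivity : 0 < E * (1 + r ^ 2)).trans hX
  have hdiff : ((d : ℝ) - 1) / r * (2 * E * r) = 2 * ((d : ℝ) - 1) * E := by field_simp
  have hzero : 0 ≤ ((d : ℝ) - 1) / r ^ 2 * pderivR w r t :=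
    mul_nonneg (div_nonneg (by linarith) (sq_nonneg r)) hX0.le
  rw [WTildeEqn, h1, hdiff] at heqn
  rw [heqn]
  have hEX : E < pderivR w r t := by nlinarith
  nlinarith [mul_lt_mul_of_pos_left hEX (by linarith : (0 : ℝ) < 2 * d)]

theorem exists_pos_max_on_halfStrip {F : ℝ → ℝ → ℝ} {R T₀ r t : ℝ}
    (hF : ContinuousOn (fun p : ℝ × ℝ => F p.1 p.2) (Icc 0 R ×ˢ Icc 0 T₀))
    (hfar : ∀ r ≥ R, ∀ t ∈ Icc 0 T₀, F r t ≤ 0) (hr : 0 ≤ r) (ht : t ∈ Icc 0 T₀)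
    (hpos : 0 < F r t) :
    ∃ r₀ ≥ 0, ∃ t₀ ∈ Icc 0 T₀, 0 < F r₀ t₀ ∧ ∀ r ≥ 0, ∀ t ∈ Icc 0 T₀, F r t ≤ F r₀ t₀ := by
  have hrR : r < R := lt_of_not_ge fun h => (hfar r h t ht).not_gt hpos
  obtain ⟨⟨r₀, t₀⟩, ⟨hr₀, ht₀⟩, hmax⟩ :=
    (isCompact_Icc.prod isCompact_Icc).exists_isMaxOn ⟨(r, t), ⟨hr, hrR.le⟩, ht⟩ hF
  have hnear : ∀ r ∈ Icc 0 R, ∀ t ∈ Icc 0 T₀, F r t ≤ F r₀ t₀ :=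
    fun r hr t ht => isMaxOn_iff.mp hmax (r, t) ⟨hr, ht⟩
  have hle : ∀ r ≥ 0, ∀ t ∈ Icc 0 T₀, F r t ≤ F r₀ t₀ := by
    intro r' hr' t' ht'
    rcases le_or_gt R r' with h | h
    · exact (hfar r' h t' ht').trans (hpos.trans_le (hnear r ⟨hr, hrR.le⟩ t ht)).le
    · exact hnear r' ⟨hr', h.le⟩ t' ht'
  exact ⟨r₀, hr₀.1, t₀, ht₀, hpos.trans_le (hle r hr t ht), hle⟩

theorem exists_interior_weighted_max {G : ℝ → ℝ → ℝ} {T₀ κ ε D r t : ℝ} (hκ : 0 ≤ κ)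
    (hε : 0 < ε) (hG : ContinuousOn (fun p : ℝ × ℝ => G p.1 p.2) (Ici 0 ×ˢ Icc 0 T₀))
    (hD : ∀ r ≥ 0, ∀ t ∈ Icc 0 T₀, G r t ≤ D) (hbdry : ∀ t ∈ Icc 0 T₀, G 0 t ≤ 0)
    (hinit : ∀ r ≥ 0, G r 0 ≤ 0) (hr : 0 ≤ r) (ht : t ∈ Icc 0 T₀)
    (hpos : ε * (1 + r ^ 2) < G r t * exp (-(κ * t))) :
    ∃ r₀ > 0, ∃ t₀ ∈ Ioc 0 T₀, ε * (1 + r₀ ^ 2) < G r₀ t₀ * exp (-(κ * t₀)) ∧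
      ∀ r ≥ 0, ∀ t ∈ Icc 0 T₀, G r t * exp (-(κ * t)) - ε * (1 + r ^ 2)
        ≤ G r₀ t₀ * exp (-(κ * t₀)) - ε * (1 + r₀ ^ 2) := by
  have hexp : ∀ t ∈ Icc 0 T₀, exp (-(κ * t)) ≤ 1 := fun t ht =>
    exp_le_one_iff.mpr (neg_nonpos.mpr (mul_nonneg hκ ht.1))
  have hD0 : 0 ≤ D := by nlinarith [hD r hr t ht, exp_pos (-(κ * t)), hexp t ht]
  have hfar : ∀ r ≥ √(D / ε), ∀ t ∈ Icc 0 T₀, G r t * exp (-(κ * t)) - ε * (1 + r ^ 2) ≤ 0 := by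
    intro r hr t ht
    have hsq := pow_le_pow_left₀ (sqrt_nonneg _) hr 2
    rw [sq_sqrt (div_nonneg hD0 hε.le), div_le_iff₀ hε] at hsq
    nlinarith [hD r ((sqrt_nonneg _).trans hr) t ht, exp_pos (-(κ * t)), hexp t ht]
  have hcont : ContinuousOn (fun p : ℝ × ℝ => G p.1 p.2 * exp (-(κ * p.2)) - ε * (1 + p.1 ^ 2))
      (Icc 0 √(D / ε) ×ˢ Icc 0 T₀) :=
    ((hG.mono (prod_mono Icc_subset_Ici_self subset_rfl)).mul (by fun_prop)).sub (by fun_prop)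
  obtain ⟨r₀, hr₀, t₀, ht₀, hF₀, hmax⟩ := exists_pos_max_on_halfStrip
    (F := fun r t => G r t * exp (-(κ * t)) - ε * (1 + r ^ 2)) hcont hfar hr ht (by linarith)
  simp only [sub_pos] at hF₀
  refine ⟨r₀, hr₀.lt_of_ne ?_, t₀, ⟨ht₀.1.lt_of_ne ?_, ht₀.2⟩, hF₀, hmax⟩
  · rintro rfl
    nlinarith [hbdry t₀ ht₀, exp_pos (-(κ * t₀))]
  · rintro rfl
    nlinarith [hinit r₀ hr₀, exp_pos (-(κ * 0))]

theorem max_pderivR_mul_exp_le {d : ℕ} (hd : 1 ≤ d) {T T₀ C D ε : ℝ} (hT₀ : T₀ < T) (hε : 0 < ε)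
    {u w : ℝ → ℝ → ℝ}
    (h_nonneg : ∀ r ∈ Ici (0 : ℝ), ∀ t ∈ Ico (0 : ℝ) T, 0 ≤ u r t ∧ 0 ≤ w r t)
    (hC : ∀ r ∈ Ici (0 : ℝ), ∀ t ∈ Icc 0 T₀, |u r t| ≤ C ∧ |w r t| ≤ C)
    (hD : ∀ r ∈ Ici (0 : ℝ), ∀ t ∈ Icc 0 T₀, |pderivR u r t| ≤ D ∧ |pderivR w r t| ≤ D)
    (hwd : ∀ r ∈ Ici (0 : ℝ), ∀ t ∈ Ico (0 : ℝ) T, DifferentiableAt ℝ (fun ρ => w ρ t) r)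
    (hcont : ContinuousOn (fun p : ℝ × ℝ => pderivR u p.1 p.2) (Ici 0 ×ˢ Ico 0 T) ∧
      ContinuousOn (fun p : ℝ × ℝ => pderivR w p.1 p.2) (Ici 0 ×ˢ Ico 0 T))
    (hsmooth : SmoothC21 (pderivR u) T ∧ SmoothC21 (pderivR w) T)
    (h_zero : ∀ t ∈ Ico (0 : ℝ) T, pderivR u 0 t = 0 ∧ pderivR w 0 t = 0)
    (hequ : ∀ r ∈ Ioi (0 : ℝ), ∀ t ∈ Ioo (0 : ℝ) T, UTildeEqn d u w r t)
    (heqw : ∀ r ∈ Ioi (0 : ℝ), ∀ t ∈ Ioo (0 : ℝ) T, WTildeEqn d u w r t)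
    (hinit : ∀ r ∈ Ici (0 : ℝ), pderivR u r 0 ≤ 0 ∧ pderivR w r 0 ≤ 0)
    {r t : ℝ} (hr : 0 ≤ r) (ht : t ∈ Icc 0 T₀) :
    max (pderivR u r t) (pderivR w r t) * exp (-((2 * d + 5 * C + 1) * t)) ≤ ε * (1 + r ^ 2) := by
  by_contra! hpos
  set κ : ℝ := 2 * d + 5 * C + 1
  have hIco : ∀ {s}, s ∈ Icc 0 T₀ → s ∈ Ico 0 T := fun hs => ⟨hs.1, hs.2.trans_lt hT₀⟩
  have hκ : 2 * d + 1 ≤ κ := by linarith [(abs_nonneg _).trans (hC r hr t ht).1]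
  obtain ⟨r₀, hr₀, t₀, ht₀, hF₀, hmax⟩ := exists_interior_weighted_max
    (hκ.trans' (by positivity)) hε
    (((hcont.1.sup hcont.2).mono (prod_mono subset_rfl fun s hs => hIco hs)))
    (fun r hr t ht => max_le ((le_abs_self _).trans (hD r hr t ht).1)
      ((le_abs_self _).trans (hD r hr t ht).2))
    (fun t ht => by simp [h_zero t (hIco ht)])
    (fun r hr => max_le (hinit r hr).1 (hinit r hr).2) hr ht hpos
  have ht₀' : t₀ ∈ Ioo 0 T := ⟨ht₀.1, (hIco (Ioc_subset_Icc_self ht₀)).2⟩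
  have hE : 0 < ε * exp (κ * t₀) := by positivity
  have hX : ε * exp (κ * t₀) * (1 + r₀ ^ 2) < max (pderivR u r₀ t₀) (pderivR w r₀ t₀) := by
    rw [exp_neg, lt_mul_inv_iff₀ (exp_pos _)] at hF₀
    linarith
  have hmax_of : ∀ f : ℝ → ℝ → ℝ, (∀ r t, f r t ≤ max (pderivR u r t) (pderivR w r t)) →
      max (pderivR u r₀ t₀) (pderivR w r₀ t₀) = f r₀ t₀ →
      ∀ r ≥ 0, ∀ t ∈ Icc 0 T₀, f r t * exp (-(κ * t)) - ε * (1 + r ^ 2)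
        ≤ f r₀ t₀ * exp (-(κ * t₀)) - ε * (1 + r₀ ^ 2) := fun f hf h₀ r hr t ht => by
    rw [← h₀]
    exact (sub_le_sub_right (mul_le_mul_of_nonneg_right (hf r t) (exp_pos _).le) _).trans
      (hmax r hr t ht)
  have ht₀c : t₀ ∈ Icc 0 T₀ := Ioc_subset_Icc_self ht₀
  rcases max_choice (pderivR u r₀ t₀) (pderivR w r₀ t₀) with h | h
  · obtain ⟨h1, h2, h3⟩ := pderiv_conditions_of_weighted_max hsmooth.1 hT₀ hr₀ ht₀
      (hmax_of _ (fun r t => le_max_left _ _) h)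
    have hu₀ : 0 ≤ u r₀ t₀ ∧ u r₀ t₀ ≤ C :=
      ⟨(h_nonneg r₀ hr₀.le t₀ (hIco ht₀c)).1, (le_abs_self _).trans (hC r₀ hr₀.le t₀ ht₀c).1⟩
    have hw₀ : ∀ ρ ∈ Icc 0 r₀, 0 ≤ w ρ t₀ ∧ w ρ t₀ ≤ C := fun ρ hρ =>
      ⟨(h_nonneg ρ hρ.1 t₀ (hIco ht₀c)).2, (le_abs_self _).trans (hC ρ hρ.1 t₀ ht₀c).2⟩
    have hwc : ContinuousOn (fun ρ => w ρ t₀) (Ici 0) := fun ρ hρ =>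
      (hwd ρ hρ t₀ (hIco ht₀c)).continuousAt.continuousWithinAt
    rw [h] at hX
    have := pderivT_lt_of_uTildeEqn hd hr₀ hu₀ hw₀ hwc (hwd r₀ hr₀.le t₀ (hIco ht₀c))
      (hequ r₀ hr₀ t₀ ht₀') hE hX ((le_max_right _ _).trans_eq h) h1 h2
    linarith
  · obtain ⟨h1, h2, h3⟩ := pderiv_conditions_of_weighted_max hsmooth.2 hT₀ hr₀ ht₀
      (hmax_of _ (fun r t => le_max_right _ _) h)
    rw [h] at hX
    have := pderivT_lt_of_wTildeEqn hd hr₀ (heqw r₀ hr₀ t₀ ht₀') hE hX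
      ((le_max_left _ _).trans_eq h) h1 h2
    nlinarith [mul_le_mul_of_nonneg_right hκ (hX.trans' (by positivity)).le]

theorem nonpos_of_forall_pos_le_mul {a b : ℝ} (h : ∀ ε > 0, a ≤ ε * b) : a ≤ 0 := by
  have hlim : Tendsto (fun ε => ε * b) (𝓝[>] 0) (𝓝 0) := by
    simpa using ((continuous_mul_const b).tendsto 0).mono_left nhdsWithin_le_nhds
  exact ge_of_tendsto hlim (eventually_nhdsWithin_of_forall h)

theorem stmt7_general (d : ℕ) (hd : 5 ≤ d) (T : ℝ)
    (u w : ℝ → ℝ → ℝ)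
    (h_nonneg : ∀ r ∈ Set.Ici (0 : ℝ), ∀ t ∈ Set.Ico (0 : ℝ) T, 0 ≤ u r t ∧ 0 ≤ w r t)
    (h_bdd : ∀ T₀ < T, ∃ Cb : ℝ, ∀ r ∈ Set.Ici (0 : ℝ), ∀ t ∈ Set.Icc 0 T₀,
      |u r t| ≤ Cb ∧ |w r t| ≤ Cb)
    (h_diffr : ∀ r ∈ Set.Ici (0 : ℝ), ∀ t ∈ Set.Ico (0 : ℝ) T,
      DifferentiableAt ℝ (fun ρ => u ρ t) r ∧ DifferentiableAt ℝ (fun ρ => w ρ t) r)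
    (htld_cont : ContinuousOn (fun p : ℝ × ℝ => pderivR u p.1 p.2)
        (Set.Ici 0 ×ˢ Set.Ico 0 T) ∧
      ContinuousOn (fun p : ℝ × ℝ => pderivR w p.1 p.2) (Set.Ici 0 ×ˢ Set.Ico 0 T))
    (htld_bdd : ∀ T₀ < T, ∃ Cb : ℝ, ∀ r ∈ Set.Ici (0 : ℝ), ∀ t ∈ Set.Icc 0 T₀,
      |pderivR u r t| ≤ Cb ∧ |pderivR w r t| ≤ Cb)
    (htld_smooth : SmoothC21 (pderivR u) T ∧ SmoothC21 (pderivR w) T)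
    (h_zero : ∀ t ∈ Set.Ico (0 : ℝ) T, pderivR u 0 t = 0 ∧ pderivR w 0 t = 0)
    (hpde1 : ∀ r ∈ Set.Ioi (0 : ℝ), ∀ t ∈ Set.Ioo (0 : ℝ) T,
      pderivT (pderivR u) r t
        = pderivRR (pderivR u) r t
          + (((d : ℝ) - 1) / r - vrad d w r t) * pderivR (pderivR u) r t
          + (-(((d : ℝ) - 1) / r ^ 2) - 2 * pderivR (vrad d w) r t
              - ((d : ℝ) - 1) / r * vrad d w r t) * pderivR u r t
          - (pderivRR (vrad d w) r t + ((d : ℝ) - 1) / r * pderivR (vrad d w) r t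
              - ((d : ℝ) - 1) / r ^ 2 * vrad d w r t) * u r t)
    (hpde2 : ∀ r ∈ Set.Ioi (0 : ℝ), ∀ t ∈ Set.Ioo (0 : ℝ) T,
      pderivT (pderivR w) r t
        = pderivRR (pderivR w) r t + ((d : ℝ) - 1) / r * pderivR (pderivR w) r t
          - ((d : ℝ) - 1) / r ^ 2 * pderivR w r t + pderivR u r t)
    (hinit : ∀ r ∈ Set.Ici (0 : ℝ), pderivR u r 0 ≤ 0 ∧ pderivR w r 0 ≤ 0) :
    ∀ r ∈ Set.Ici (0 : ℝ), ∀ t ∈ Set.Ico (0 : ℝ) T,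
      pderivR u r t ≤ 0 ∧ pderivR w r t ≤ 0 := by
  intro r hr t ht
  have hT₀ : (t + T) / 2 < T := by linarith [ht.2]
  obtain ⟨C, hC⟩ := h_bdd _ hT₀
  obtain ⟨D, hD⟩ := htld_bdd _ hT₀
  have hweighted : max (pderivR u r t) (pderivR w r t) * exp (-((2 * d + 5 * C + 1) * t)) ≤ 0 :=
    nonpos_of_forall_pos_le_mul fun ε hε =>
      max_pderivR_mul_exp_le (by omega) hT₀ hε h_nonneg hC hD
        (fun r hr t ht => (h_diffr r hr t ht).2) htld_cont htld_smooth h_zero hpde1 hpde2 hinit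
        hr ⟨ht.1, by linarith [ht.2]⟩
  exact max_le_iff.mp (nonpos_of_mul_nonpos_left hweighted (exp_pos _))

/-- Preservation of radial monotonicity: the `r`-derivatives
`ũ = ∂_r u`, `w̃ = ∂_r w` stay nonpositive if they are nonpositive initially. -/
theorem stmt7 (d : ℕ) (hd : 5 ≤ d) (T : ℝ) (hT : 0 < T)
    (u w : ℝ → ℝ → ℝ)
    (h_nonneg : ∀ r ∈ Set.Ici (0 : ℝ), ∀ t ∈ Set.Ico (0 : ℝ) T, 0 ≤ u r t ∧ 0 ≤ w r t)
    (h_bdd : ∀ T₀ < T, ∃ Cb : ℝ, ∀ r ∈ Set.Ici (0 : ℝ), ∀ t ∈ Set.Icc 0 T₀,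
      |u r t| ≤ Cb ∧ |w r t| ≤ Cb)
    (h_diffr : ∀ r ∈ Set.Ici (0 : ℝ), ∀ t ∈ Set.Ico (0 : ℝ) T,
      DifferentiableAt ℝ (fun ρ => u ρ t) r ∧ DifferentiableAt ℝ (fun ρ => w ρ t) r)
    (htld_cont : ContinuousOn (fun p : ℝ × ℝ => pderivR u p.1 p.2)
        (Set.Ici 0 ×ˢ Set.Ico 0 T) ∧
      ContinuousOn (fun p : ℝ × ℝ => pderivR w p.1 p.2) (Set.Ici 0 ×ˢ Set.Ico 0 T))
    (htld_bdd : ∀ T₀ < T, ∃ Cb : ℝ, ∀ r ∈ Set.Ici (0 : ℝ), ∀ t ∈ Set.Icc 0 T₀,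
      |pderivR u r t| ≤ Cb ∧ |pderivR w r t| ≤ Cb)
    (htld_smooth : SmoothC21 (pderivR u) T ∧ SmoothC21 (pderivR w) T)
    (h_zero : ∀ t ∈ Set.Ico (0 : ℝ) T, pderivR u 0 t = 0 ∧ pderivR w 0 t = 0)
    (hpde1 : ∀ r ∈ Set.Ioi (0 : ℝ), ∀ t ∈ Set.Ioo (0 : ℝ) T,
      pderivT (pderivR u) r t
        = pderivRR (pderivR u) r t
          + (((d : ℝ) - 1) / r - vrad d w r t) * pderivR (pderivR u) r t
          + (-(((d : ℝ) - 1) / r ^ 2) - 2 * pderivR (vrad d w) r t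
              - ((d : ℝ) - 1) / r * vrad d w r t) * pderivR u r t
          - (pderivRR (vrad d w) r t + ((d : ℝ) - 1) / r * pderivR (vrad d w) r t
              - ((d : ℝ) - 1) / r ^ 2 * vrad d w r t) * u r t)
    (hpde2 : ∀ r ∈ Set.Ioi (0 : ℝ), ∀ t ∈ Set.Ioo (0 : ℝ) T,
      pderivT (pderivR w) r t
        = pderivRR (pderivR w) r t + ((d : ℝ) - 1) / r * pderivR (pderivR w) r t
          - ((d : ℝ) - 1) / r ^ 2 * pderivR w r t + pderivR u r t)
    (hinit : ∀ r ∈ Set.Ici (0 : ℝ), pderivR u r 0 ≤ 0 ∧ pderivR w r 0 ≤ 0) :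
    ∀ r ∈ Set.Ici (0 : ℝ), ∀ t ∈ Set.Ico (0 : ℝ) T,
      pderivR u r t ≤ 0 ∧ pderivR w r t ≤ 0 :=
  stmt7_general d hd T u w h_nonneg h_bdd h_diffr htld_cont htld_bdd htld_smooth h_zero hpde1 hpde2
    hinit
end

section
/- (Existence of a finite-time blowing-up subsolution of the mass-function system.) Let d ≥ 5 be an integer and t₀ ∈ ℝ. Then there exist real numbers A, B, k > 0 satisfying B > 4, A/B > (2d−3+√((2d−3)²+32))/2, and 2B(d+2)/(A−B) < k < min{A/B − 2(d−2), (d/2)·B}, such that the functions f(r,t) := A/(r⁴ + k·(1−(t−t₀))²) and g(r,t) := B/(r² + k·(1−(t−t₀))) satisfy, for all r ∈ (0,∞) and all t ∈ (t₀, t₀+1): ∂_t f − ∂_{rr} f − ((d+1)/r)∂_r f − r·(∂_r f)·g − d·f·g ≤ 0 and ∂_t g − ∂_{rr} g − ((d+1)/r)∂_r g − f ≤ 0. -/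
/-!
Write `u = 1 - (t - t₀)`, `E = r⁴ + k u²` and `F = r² + k u`. Both residuals are explicit rational
functions. Multiplied by `E³ F / A`, the residual of the `M`-equation becomes `E Q - 32 r⁶ F`, where
`Q` is a quadratic form in `(r², u)`; it is negative semidefinite once its discriminant is
nonpositive. Multiplied by `F³ E`, the residual of the `W`-equation becomes
`B (k + 2d + 4) F E - 8 B r² E - A F³`, which is nonpositive when `A ≥ B (k + 2d + 4)`, because
`E ≤ F²` for `k ≥ 1`. For `d ≥ 5` the choice `k = 2`, `B = 8 (d + 4)`, `A = (2d + 6) B` meets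
both conditions as well as the constraints of the statement.
-/

open Filter Topology

section ConstDivPowAdd

variable (A : ℝ) {n : ℕ}

theorem hasDerivAt_const_div_pow_add {c x : ℝ} (hx : x ^ n + c ≠ 0) :
    HasDerivAt (fun ρ => A / (ρ ^ n + c)) (-(A * n * x ^ (n - 1)) / (x ^ n + c) ^ 2) x :=
  ((hasDerivAt_const x A).fun_div ((hasDerivAt_pow n x).add_const c) hx).congr_deriv (by ring)

theorem deriv_deriv_const_div_pow_add (hn : 2 ≤ n) {c x : ℝ} (hc : 0 ≤ c) (hx : 0 < x) :
    deriv (deriv fun ρ => A / (ρ ^ n + c)) x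
      = A * n * x ^ (n - 2) * ((n + 1) * x ^ n - (n - 1) * c) / (x ^ n + c) ^ 3 := by
  have hpos : ∀ ρ : ℝ, 0 < ρ → ρ ^ n + c ≠ 0 := fun ρ hρ => by positivity
  have hderiv : deriv (fun ρ => A / (ρ ^ n + c))
      =ᶠ[𝓝 x] fun ρ => -(A * n * ρ ^ (n - 1)) / (ρ ^ n + c) ^ 2 :=
    eventually_of_mem (Ioi_mem_nhds hx) fun ρ hρ =>
      (hasDerivAt_const_div_pow_add A (hpos ρ hρ)).deriv
  obtain ⟨m, rfl⟩ := Nat.exists_eq_add_of_le' hn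
  have h := (((hasDerivAt_pow (m + 1) x).const_mul (A * (m + 2 : ℕ))).fun_neg).fun_div
    (((hasDerivAt_pow (m + 2) x).add_const c).fun_pow 2) (pow_ne_zero 2 (hpos x hx))
  rw [hderiv.deriv_eq, show m + 2 - 1 = m + 1 by omega, h.deriv]
  field_simp
  push_cast
  ring

theorem pderivT_const_div_pow_add {c : ℝ → ℝ} {c' r t : ℝ} (hc : HasDerivAt c c' t)
    (h : r ^ n + c t ≠ 0) :
    pderivT (fun r t => A / (r ^ n + c t)) r t = -(A * c') / (r ^ n + c t) ^ 2 := by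
  rw [pderivT, ((hasDerivAt_const t A).fun_div (hc.const_add _) h).deriv]
  ring

theorem pderivR_const_div_pow_add {c : ℝ → ℝ} {r t : ℝ} (h : r ^ n + c t ≠ 0) :
    pderivR (fun r t => A / (r ^ n + c t)) r t = -(A * n * r ^ (n - 1)) / (r ^ n + c t) ^ 2 :=
  (hasDerivAt_const_div_pow_add A h).deriv

theorem pderivRR_const_div_pow_add (hn : 2 ≤ n) {c : ℝ → ℝ} {r t : ℝ} (hc : 0 ≤ c t)
    (hr : 0 < r) :
    pderivRR (fun r t => A / (r ^ n + c t)) r t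
      = A * n * r ^ (n - 2) * ((n + 1) * r ^ n - (n - 1) * c t) / (r ^ n + c t) ^ 3 :=
  deriv_deriv_const_div_pow_add A hn hc hr

end ConstDivPowAdd

theorem hasDerivAt_one_sub_sub (t₀ t : ℝ) : HasDerivAt (fun s => 1 - (s - t₀)) (-1) t := by
  simpa using ((hasDerivAt_id t).sub_const t₀).const_sub 1

theorem neg_quadratic_form_nonpos {K : Type*} [Field K] [LinearOrder K] [IsStrictOrderedRing K]
    {a b c : K} (ha : 0 < a) (h : b ^ 2 ≤ 4 * a * c) (x y : K) :
    -(a * x ^ 2) + b * x * y - c * y ^ 2 ≤ 0 := by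
  nlinarith [sq_nonneg (2 * a * x - b * y), mul_nonneg (sub_nonneg.2 h) (sq_nonneg y)]

/-- `residualM d f g ≤ 0` and `residualW d f g ≤ 0` say that `(f, g)` is a subsolution of the
mass-function system `M_t = M_rr + ((d+1)/r) M_r + r M_r W + d M W`,
`W_t = W_rr + ((d+1)/r) W_r + M`. -/
noncomputable def residualM (d : ℝ) (f g : ℝ → ℝ → ℝ) (r t : ℝ) : ℝ :=
  pderivT f r t - pderivRR f r t - (d + 1) / r * pderivR f r t - r * pderivR f r t * g r t
    - d * f r t * g r t

noncomputable def residualW (d : ℝ) (f g : ℝ → ℝ → ℝ) (r t : ℝ) : ℝ :=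
  pderivT g r t - pderivRR g r t - (d + 1) / r * pderivR g r t - f r t

noncomputable def blowupM (A k t₀ : ℝ) : ℝ → ℝ → ℝ :=
  fun r t => A / (r ^ 4 + k * (1 - (t - t₀)) ^ 2)

noncomputable def blowupW (B k t₀ : ℝ) : ℝ → ℝ → ℝ :=
  fun r t => B / (r ^ 2 + k * (1 - (t - t₀)))

section BlowupSubsolution

variable {d A B k t₀ r t : ℝ}

theorem residualM_blowup_nonpos (hA : 0 ≤ A) (hk : 0 < k)
    (hα : 0 < (d - 4) * B - 4 * (d + 4))
    (hdisc : k * (2 * d + 9) ^ 2 ≤ ((d - 4) * B - 4 * (d + 4)) * (d * B - 2 * k))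
    (hr : 0 < r) (ht : t < t₀ + 1) :
    residualM d (blowupM A k t₀) (blowupW B k t₀) r t ≤ 0 := by
  set u := 1 - (t - t₀) with hu_def
  have hu : 0 < u := by linarith
  have hE : 0 < r ^ 4 + k * u ^ 2 := by positivity
  have hF : 0 < r ^ 2 + k * u := by positivity
  have key : residualM d (blowupM A k t₀) (blowupW B k t₀) r t
      = A * ((r ^ 4 + k * u ^ 2) * (-(((d - 4) * B - 4 * (d + 4)) * (r ^ 2) ^ 2)
          + 2 * k * (2 * d + 9) * r ^ 2 * u - k * (d * B - 2 * k) * u ^ 2)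
          - 32 * r ^ 6 * (r ^ 2 + k * u)) / ((r ^ 4 + k * u ^ 2) ^ 3 * (r ^ 2 + k * u)) := by
    unfold residualM blowupM blowupW
    rw [pderivT_const_div_pow_add _ (((hasDerivAt_one_sub_sub t₀ t).fun_pow 2).const_mul k) hE.ne',
      pderivRR_const_div_pow_add _ (by norm_num) (by positivity) hr,
      pderivR_const_div_pow_add _ (t := t) hE.ne', ← hu_def]
    field_simp
    ring
  have hQ := neg_quadratic_form_nonpos hα (b := 2 * k * (2 * d + 9)) (c := k * (d * B - 2 * k))
    (by nlinarith) (r ^ 2) u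
  rw [key]
  refine div_nonpos_of_nonpos_of_nonneg (mul_nonpos_of_nonneg_of_nonpos hA ?_) (by positivity)
  nlinarith [mul_nonpos_of_nonneg_of_nonpos hE.le hQ, mul_pos (pow_pos hr 6) hF]

theorem residualW_blowup_nonpos (hA : 0 ≤ A) (hB : 0 ≤ B) (hk : 1 ≤ k)
    (hBA : B * (k + 2 * d + 4) ≤ A) (hr : 0 < r) (ht : t < t₀ + 1) :
    residualW d (blowupM A k t₀) (blowupW B k t₀) r t ≤ 0 := by
  set u := 1 - (t - t₀) with hu_def
  have hu : 0 < u := by linarith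
  have hE : 0 < r ^ 4 + k * u ^ 2 := by positivity
  have hF : 0 < r ^ 2 + k * u := by positivity
  have hEF : r ^ 4 + k * u ^ 2 ≤ (r ^ 2 + k * u) ^ 2 := by
    nlinarith [mul_nonneg (mul_nonneg (by linarith : (0 : ℝ) ≤ k) hu.le) (sq_nonneg r),
      mul_nonneg (mul_nonneg (by linarith : (0 : ℝ) ≤ k) (sub_nonneg.2 hk)) (sq_nonneg u)]
  have key : residualW d (blowupM A k t₀) (blowupW B k t₀) r t
      = (B * (k + 2 * d + 4) * (r ^ 2 + k * u) * (r ^ 4 + k * u ^ 2)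
          - 8 * B * r ^ 2 * (r ^ 4 + k * u ^ 2) - A * (r ^ 2 + k * u) ^ 3)
        / ((r ^ 2 + k * u) ^ 3 * (r ^ 4 + k * u ^ 2)) := by
    unfold residualW blowupM blowupW
    rw [pderivT_const_div_pow_add _ ((hasDerivAt_one_sub_sub t₀ t).const_mul k) hF.ne',
      pderivRR_const_div_pow_add _ le_rfl (by positivity) hr,
      pderivR_const_div_pow_add _ (t := t) hF.ne', ← hu_def]
    field_simp
    ring
  rw [key]
  refine div_nonpos_of_nonpos_of_nonneg ?_ (by positivity)
  nlinarith [mul_le_mul_of_nonneg_right hBA (mul_pos hF hE).le,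
    mul_le_mul_of_nonneg_left hEF (mul_nonneg hA hF.le),
    mul_nonneg hB (mul_nonneg (sq_nonneg r) hE.le)]

end BlowupSubsolution

/-- Existence of a finite-time blowing-up subsolution
`f(r,t) = A/(r⁴ + k(1−(t−t₀))²)`, `g(r,t) = B/(r² + k(1−(t−t₀)))` of the
mass-function system. -/
theorem stmt11 (d : ℕ) (hd : 5 ≤ d) (t₀ : ℝ) :
    ∃ A B k : ℝ, 0 < A ∧ 0 < B ∧ 0 < k ∧ 4 < B ∧
      (2 * (d : ℝ) - 3 + Real.sqrt ((2 * (d : ℝ) - 3) ^ 2 + 32)) / 2 < A / B ∧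
      2 * B * ((d : ℝ) + 2) / (A - B) < k ∧
      k < min (A / B - 2 * ((d : ℝ) - 2)) ((d : ℝ) / 2 * B) ∧
      ∀ r ∈ Set.Ioi (0 : ℝ), ∀ t ∈ Set.Ioo t₀ (t₀ + 1),
        (pderivT (fun r t => A / (r ^ 4 + k * (1 - (t - t₀)) ^ 2)) r t
            - pderivRR (fun r t => A / (r ^ 4 + k * (1 - (t - t₀)) ^ 2)) r t
            - ((d : ℝ) + 1) / r * pderivR (fun r t => A / (r ^ 4 + k * (1 - (t - t₀)) ^ 2)) r t
            - r * pderivR (fun r t => A / (r ^ 4 + k * (1 - (t - t₀)) ^ 2)) r t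
              * (B / (r ^ 2 + k * (1 - (t - t₀))))
            - (d : ℝ) * (A / (r ^ 4 + k * (1 - (t - t₀)) ^ 2))
              * (B / (r ^ 2 + k * (1 - (t - t₀)))) ≤ 0) ∧
        (pderivT (fun r t => B / (r ^ 2 + k * (1 - (t - t₀)))) r t
            - pderivRR (fun r t => B / (r ^ 2 + k * (1 - (t - t₀)))) r t
            - ((d : ℝ) + 1) / r * pderivR (fun r t => B / (r ^ 2 + k * (1 - (t - t₀)))) r t
            - A / (r ^ 4 + k * (1 - (t - t₀)) ^ 2) ≤ 0) := by
  have hd5 : (5 : ℝ) ≤ d := by exact_mod_cast hd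
  have hB : (0 : ℝ) < 8 * (d + 4) := by positivity
  have hA : (0 : ℝ) ≤ (2 * d + 6) * (8 * (d + 4)) := by positivity
  have hsqrt : √((2 * (d : ℝ) - 3) ^ 2 + 32) ≤ 2 * d + 1 :=
    Real.sqrt_le_iff.2 ⟨by linarith, by nlinarith⟩
  refine ⟨(2 * d + 6) * (8 * (d + 4)), 8 * (d + 4), 2, by positivity, hB, two_pos, by linarith,
    ?_, ?_, ?_, fun r hr t ht => ⟨?_, ?_⟩⟩
  · rw [mul_div_cancel_right₀ _ hB.ne']
    linarith
  · rw [div_lt_iff₀ (by nlinarith)]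
    nlinarith
  · rw [mul_div_cancel_right₀ _ hB.ne', lt_min_iff]
    constructor <;> nlinarith
  · exact residualM_blowup_nonpos (d := d) (B := 8 * (d + 4)) hA two_pos (by nlinarith)
      (by nlinarith) hr ht.2
  · exact residualW_blowup_nonpos (d := d) hA hB.le one_le_two (by linarith) hr ht.2
end
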